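/- arXiv:1604.07456 — 4 statements merged into one kernel-verified Lean document; each statement's English description precedes it below -/
import Mathlib

section
/- The operators T_1,…,T_{k−1} satisfy the Hecke quadratic relation (T_i − 1)(T_i + q) = 0 as K-linear operators on L, the braid relations T_i T_{i+1} T_i = T_{i+1} T_i T_{i+1} for 1 ≤ i ≤ k−2, and the commutation relations T_i T_j = T_j T_i whenever |i − j| > 1. In particular each T_i is invertible with T_i^{-1} = q^{-1}(T_i + q − 1). -/
/-!
Each `T_i` is the operator `F ↦ ((q-1) x F + (y - q x) σ F) / (y - x)` with `x = y_i`,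
`y = y_{i+1}` and `σ = s_i`, so every relation becomes an identity of rational functions in `q`,
the `y`'s and the images of `F` under words in the `s_i`. Those words reduce because `s_i` fixes
`q`, acts on the `y`'s by a transposition, and a `K`-automorphism of `L` is determined by its
values on the `y`'s: hence `s_i² = 1`, `s_i s_{i+1} s_i = s_{i+1} s_i s_{i+1}` and
`s_i s_j = s_j s_i` for `|i - j| > 1`, inherited from the same identities among transpositions.
-/

noncomputable section

/-- The field `K = ℚ(q)` of rational functions in one variable `q` over `ℚ`. -/
abbrev Kq : Type := RatFunc ℚ

/-- The field `L = K(y_1,…,y_k)` of rational functions in `k` variables over `K`. -/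
abbrev Lk (k : ℕ) : Type := FractionRing (MvPolynomial (Fin k) Kq)

/-- The variable `y_i ∈ L`. -/
def yy {k : ℕ} (i : Fin k) : Lk k :=
  algebraMap (MvPolynomial (Fin k) Kq) (Lk k) (MvPolynomial.X i)

/-- The element `q ∈ L`. -/
def qL (k : ℕ) : Lk k := algebraMap Kq (Lk k) RatFunc.X

/-- The Demazure–Lusztig type operator
`T_i F = ((q−1)·y_i·F + (y_{i+1} − q·y_i)·s_i(F)) / (y_{i+1} − y_i)`,
where `s_i` interchanges `y_i` and `y_{i+1}`. -/
def Tdl {k : ℕ} (s : ℕ → Lk k → Lk k) (i : ℕ) (hi : i + 1 < k) (F : Lk k) : Lk k :=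
  ((qL k - 1) * yy ⟨i, Nat.lt_of_succ_lt hi⟩ * F +
      (yy ⟨i + 1, hi⟩ - qL k * yy ⟨i, Nat.lt_of_succ_lt hi⟩) * s i F) /
    (yy ⟨i + 1, hi⟩ - yy ⟨i, Nat.lt_of_succ_lt hi⟩)

section DemazureLusztig

variable {L E : Type*} [Field L] [FunLike E L L] [RingHomClass E L L]

def demazureLusztig (q x y : L) (σ : L → L) (F : L) : L :=
  ((q - 1) * x * F + (y - q * x) * σ F) / (y - x)

variable {q x y z : L} {σ τ : E}

theorem demazureLusztig_add (F G : L) :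
    demazureLusztig q x y σ (F + G) = demazureLusztig q x y σ F + demazureLusztig q x y σ G := by
  simp only [demazureLusztig, map_add]
  ring

theorem demazureLusztig_mul_of_apply_eq {c : L} (hc : σ c = c) (F : L) :
    demazureLusztig q x y σ (c * F) = c * demazureLusztig q x y σ F := by
  simp only [demazureLusztig, map_mul, hc]
  ring

theorem demazureLusztig_hecke (hxy : x ≠ y) (hq : σ q = q) (hx : σ x = y) (hy : σ y = x)
    (hσ : ∀ F, σ (σ F) = F) (F : L) :
    demazureLusztig q x y σ (demazureLusztig q x y σ F) +
      (q - 1) * demazureLusztig q x y σ F = q * F := by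
  have hyx : y - x ≠ 0 := sub_ne_zero.mpr hxy.symm
  have hxy' : x - y ≠ 0 := sub_ne_zero.mpr hxy
  simp only [demazureLusztig, map_div₀, map_add, map_mul, map_sub, map_one, hq, hx, hy, hσ]
  field_simp
  ring

theorem demazureLusztig_inverse (hq0 : q ≠ 0) (hq : σ q = q) {F : L}
    (hecke : demazureLusztig q x y σ (demazureLusztig q x y σ F) +
      (q - 1) * demazureLusztig q x y σ F = q * F) :
    demazureLusztig q x y σ (q⁻¹ * (demazureLusztig q x y σ F + (q - 1) * F)) = F ∧
      q⁻¹ * (demazureLusztig q x y σ (demazureLusztig q x y σ F) +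
        (q - 1) * demazureLusztig q x y σ F) = F := by
  have hq' : σ q⁻¹ = q⁻¹ := by rw [map_inv₀, hq]
  have hq1 : σ (q - 1) = q - 1 := by rw [map_sub, map_one, hq]
  refine ⟨?_, by rw [hecke, inv_mul_cancel_left₀ hq0]⟩
  rw [demazureLusztig_mul_of_apply_eq hq', demazureLusztig_add,
    demazureLusztig_mul_of_apply_eq hq1, hecke, inv_mul_cancel_left₀ hq0]

theorem demazureLusztig_comm {x' y' : L} (hσq : σ q = q) (hτq : τ q = q)
    (hσx' : σ x' = x') (hσy' : σ y' = y') (hτx : τ x = x) (hτy : τ y = y)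
    (hστ : ∀ F, σ (τ F) = τ (σ F)) (F : L) :
    demazureLusztig q x y σ (demazureLusztig q x' y' τ F) =
      demazureLusztig q x' y' τ (demazureLusztig q x y σ F) := by
  simp only [demazureLusztig, map_div₀, map_add, map_mul, map_sub, map_one,
    hσq, hτq, hσx', hσy', hτx, hτy, hστ]
  ring

theorem demazureLusztig_braid (hxy : x ≠ y) (hyz : y ≠ z) (hxz : x ≠ z)
    (hσq : σ q = q) (hσx : σ x = y) (hσy : σ y = x) (hσz : σ z = z)
    (hσ : ∀ F, σ (σ F) = F) (hτq : τ q = q) (hτx : τ x = x) (hτy : τ y = z) (hτz : τ z = y)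
    (hτ : ∀ F, τ (τ F) = F) (hστ : ∀ F, σ (τ (σ F)) = τ (σ (τ F))) (F : L) :
    demazureLusztig q x y σ (demazureLusztig q y z τ (demazureLusztig q x y σ F)) =
      demazureLusztig q y z τ (demazureLusztig q x y σ (demazureLusztig q y z τ F)) := by
  have h1 : y - x ≠ 0 := sub_ne_zero.mpr hxy.symm
  have h2 : x - y ≠ 0 := sub_ne_zero.mpr hxy
  have h3 : z - y ≠ 0 := sub_ne_zero.mpr hyz.symm
  have h4 : y - z ≠ 0 := sub_ne_zero.mpr hyz
  have h5 : z - x ≠ 0 := sub_ne_zero.mpr hxz.symm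
  have h6 : x - z ≠ 0 := sub_ne_zero.mpr hxz
  simp only [demazureLusztig, map_div₀, map_add, map_mul, map_sub, map_one,
    hσq, hσx, hσy, hσz, hσ, hτq, hτx, hτy, hτz, hτ, hστ]
  field_simp
  ring

end DemazureLusztig

theorem Equiv.swap_apply_swap_apply_swap_apply {α : Type*} [DecidableEq α] {a b c : α}
    (hab : a ≠ b) (hac : a ≠ c) (hbc : b ≠ c) (j : α) :
    swap a b (swap b c (swap a b j)) = swap b c (swap a b (swap b c j)) := by
  simp only [swap_apply_def]
  grind

theorem Equiv.swap_apply_swap_apply_comm {α : Type*} [DecidableEq α] {a b c d : α}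
    (hac : a ≠ c) (had : a ≠ d) (hbc : b ≠ c) (hbd : b ≠ d) (j : α) :
    swap a b (swap c d j) = swap c d (swap a b j) := by
  simp only [swap_apply_def]
  grind

section Lk

variable {k : ℕ}

theorem yy_injective : Function.Injective (yy : Fin k → Lk k) :=
  (IsFractionRing.injective (MvPolynomial (Fin k) Kq) (Lk k)).comp MvPolynomial.X_injective

theorem qL_ne_zero : qL k ≠ 0 :=
  (map_ne_zero (algebraMap Kq (Lk k))).mpr RatFunc.X_ne_zero

theorem AlgEquiv.apply_qL (e : Lk k ≃ₐ[Kq] Lk k) : e (qL k) = qL k :=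
  e.commutes _

theorem Lk.algHom_ext {f g : Lk k →ₐ[Kq] Lk k} (h : ∀ j, f (yy j) = g (yy j)) : f = g := by
  have hpoly : f.comp (IsScalarTower.toAlgHom Kq (MvPolynomial (Fin k) Kq) (Lk k)) =
      g.comp (IsScalarTower.toAlgHom Kq (MvPolynomial (Fin k) Kq) (Lk k)) :=
    MvPolynomial.algHom_ext h
  exact AlgHom.coe_ringHom_injective <|
    IsFractionRing.ringHom_ext (A := MvPolynomial (Fin k) Kq) (AlgHom.congr_fun hpoly)

theorem yy_mk_ne {m n : ℕ} (hm : m < k) (hn : n < k) (h : m ≠ n) :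
    yy (⟨m, hm⟩ : Fin k) ≠ yy ⟨n, hn⟩ :=
  yy_injective.ne (Fin.ne_of_val_ne h)

end Lk

section Swaps

open Equiv

variable {k : ℕ} {e e' : Lk k ≃ₐ[Kq] Lk k} {a b c d : Fin k}

theorem Lk.apply_apply_of_swap (he : ∀ j, e (yy j) = yy (swap a b j)) (F : Lk k) :
    e (e F) = F :=
  AlgHom.congr_fun (Lk.algHom_ext (f := e.toAlgHom.comp e) (g := AlgHom.id Kq (Lk k))
    (fun j => by simp [he])) F

theorem Lk.braid_of_swap (he : ∀ j, e (yy j) = yy (swap a b j))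
    (he' : ∀ j, e' (yy j) = yy (swap b c j)) (hab : a ≠ b) (hac : a ≠ c) (hbc : b ≠ c)
    (F : Lk k) : e (e' (e F)) = e' (e (e' F)) :=
  AlgHom.congr_fun (Lk.algHom_ext (f := e.toAlgHom.comp (e'.toAlgHom.comp e))
    (g := e'.toAlgHom.comp (e.toAlgHom.comp e'))
    (fun j => by simp [he, he', swap_apply_swap_apply_swap_apply hab hac hbc])) F

theorem Lk.comm_of_swap (he : ∀ j, e (yy j) = yy (swap a b j))
    (he' : ∀ j, e' (yy j) = yy (swap c d j)) (hac : a ≠ c) (had : a ≠ d) (hbc : b ≠ c)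
    (hbd : b ≠ d) (F : Lk k) : e (e' F) = e' (e F) :=
  AlgHom.congr_fun (Lk.algHom_ext (f := e.toAlgHom.comp e') (g := e'.toAlgHom.comp e)
    (fun j => by simp [he, he', swap_apply_swap_apply_comm hac had hbc hbd])) F

end Swaps

section Tdl

variable {k : ℕ}

def SwapsAdjacent (s : ℕ → Lk k ≃ₐ[Kq] Lk k) : Prop :=
  ∀ (i : ℕ) (hi : i + 1 < k) (j : Fin k),
    s i (yy j) = yy (Equiv.swap ⟨i, Nat.lt_of_succ_lt hi⟩ ⟨i + 1, hi⟩ j)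

theorem Tdl_eq_demazureLusztig (s : ℕ → Lk k ≃ₐ[Kq] Lk k) (i : ℕ) (hi : i + 1 < k) :
    Tdl (fun n => ⇑(s n)) i hi =
      demazureLusztig (qL k) (yy ⟨i, Nat.lt_of_succ_lt hi⟩) (yy ⟨i + 1, hi⟩) (s i) :=
  rfl

variable {s : ℕ → Lk k ≃ₐ[Kq] Lk k}

namespace SwapsAdjacent

theorem apply_left (hs : SwapsAdjacent s) (i : ℕ) (hi : i + 1 < k) :
    s i (yy ⟨i, Nat.lt_of_succ_lt hi⟩) = yy ⟨i + 1, hi⟩ := by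
  rw [hs i hi, Equiv.swap_apply_left]

theorem apply_right (hs : SwapsAdjacent s) (i : ℕ) (hi : i + 1 < k) :
    s i (yy ⟨i + 1, hi⟩) = yy ⟨i, Nat.lt_of_succ_lt hi⟩ := by
  rw [hs i hi, Equiv.swap_apply_right]

theorem apply_of_ne (hs : SwapsAdjacent s) (i : ℕ) (hi : i + 1 < k) {m : ℕ} (hm : m < k)
    (h : m ≠ i) (h' : m ≠ i + 1) : s i (yy ⟨m, hm⟩) = yy ⟨m, hm⟩ := by
  rw [hs i hi, Equiv.swap_apply_of_ne_of_ne (Fin.ne_of_val_ne h) (Fin.ne_of_val_ne h')]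

theorem apply_apply (hs : SwapsAdjacent s) (i : ℕ) (hi : i + 1 < k) (F : Lk k) :
    s i (s i F) = F :=
  Lk.apply_apply_of_swap (hs i hi) F

theorem braid (hs : SwapsAdjacent s) (i : ℕ) (hi : i + 2 < k) (F : Lk k) :
    s i (s (i + 1) (s i F)) = s (i + 1) (s i (s (i + 1) F)) :=
  Lk.braid_of_swap (hs i (Nat.lt_of_succ_lt hi)) (hs (i + 1) hi)
    (Fin.mk.inj_iff.not.mpr (by omega)) (Fin.mk.inj_iff.not.mpr (by omega))
    (Fin.mk.inj_iff.not.mpr (by omega)) F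

theorem comm (hs : SwapsAdjacent s) (i j : ℕ) (hi : i + 1 < k) (hj : j + 1 < k)
    (hij : i + 1 < j ∨ j + 1 < i) (F : Lk k) : s i (s j F) = s j (s i F) :=
  Lk.comm_of_swap (hs i hi) (hs j hj) (Fin.mk.inj_iff.not.mpr (by omega))
    (Fin.mk.inj_iff.not.mpr (by omega)) (Fin.mk.inj_iff.not.mpr (by omega))
    (Fin.mk.inj_iff.not.mpr (by omega)) F

end SwapsAdjacent

theorem Tdl_hecke (hs : SwapsAdjacent s) (i : ℕ) (hi : i + 1 < k) (F : Lk k) :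
    Tdl (fun n => ⇑(s n)) i hi (Tdl (fun n => ⇑(s n)) i hi F) +
      (qL k - 1) * Tdl (fun n => ⇑(s n)) i hi F = qL k * F := by
  rw [Tdl_eq_demazureLusztig]
  exact demazureLusztig_hecke (yy_mk_ne _ _ (by omega)) ((s i).apply_qL)
    (hs.apply_left i hi) (hs.apply_right i hi) (hs.apply_apply i hi) F

theorem Tdl_braid (hs : SwapsAdjacent s) (i : ℕ) (hi : i + 2 < k) (F : Lk k) :
    Tdl (fun n => ⇑(s n)) i (Nat.lt_of_succ_lt hi)
        (Tdl (fun n => ⇑(s n)) (i + 1) hi (Tdl (fun n => ⇑(s n)) i (Nat.lt_of_succ_lt hi) F)) =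
      Tdl (fun n => ⇑(s n)) (i + 1) hi
        (Tdl (fun n => ⇑(s n)) i (Nat.lt_of_succ_lt hi) (Tdl (fun n => ⇑(s n)) (i + 1) hi F)) := by
  have hi' : i + 1 < k := Nat.lt_of_succ_lt hi
  simp only [Tdl_eq_demazureLusztig]
  exact demazureLusztig_braid (yy_mk_ne _ _ (by omega)) (yy_mk_ne _ _ (by omega))
    (yy_mk_ne _ _ (by omega)) ((s i).apply_qL) (hs.apply_left i hi') (hs.apply_right i hi')
    (hs.apply_of_ne i hi' hi (by omega) (by omega)) (hs.apply_apply i hi')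
    ((s (i + 1)).apply_qL) (hs.apply_of_ne (i + 1) hi _ (by omega) (by omega))
    (hs.apply_left (i + 1) hi) (hs.apply_right (i + 1) hi) (hs.apply_apply (i + 1) hi)
    (hs.braid i hi) F

theorem Tdl_comm (hs : SwapsAdjacent s) (i j : ℕ) (hi : i + 1 < k) (hj : j + 1 < k)
    (hij : i + 1 < j ∨ j + 1 < i) (F : Lk k) :
    Tdl (fun n => ⇑(s n)) i hi (Tdl (fun n => ⇑(s n)) j hj F) =
      Tdl (fun n => ⇑(s n)) j hj (Tdl (fun n => ⇑(s n)) i hi F) := by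
  simp only [Tdl_eq_demazureLusztig]
  exact demazureLusztig_comm ((s i).apply_qL) ((s j).apply_qL)
    (hs.apply_of_ne i hi _ (by omega) (by omega)) (hs.apply_of_ne i hi hj (by omega) (by omega))
    (hs.apply_of_ne j hj _ (by omega) (by omega)) (hs.apply_of_ne j hj hi (by omega) (by omega))
    (hs.comm i j hi hj hij) F

end Tdl

theorem Tdl_hecke_braid_relations_general (k : ℕ)
    (s : ℕ → (Lk k ≃ₐ[Kq] Lk k))
    (hs : ∀ (i : ℕ) (hi : i + 1 < k) (j : Fin k),
      s i (yy j) = yy (Equiv.swap ⟨i, Nat.lt_of_succ_lt hi⟩ ⟨i + 1, hi⟩ j)) :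
    -- K-linearity
    (∀ (i : ℕ) (hi : i + 1 < k) (a : Kq) (F G : Lk k),
      Tdl (fun n => ⇑(s n)) i hi (algebraMap Kq (Lk k) a * F + G) =
        algebraMap Kq (Lk k) a * Tdl (fun n => ⇑(s n)) i hi F +
          Tdl (fun n => ⇑(s n)) i hi G) ∧
    -- the Hecke quadratic relation (T_i − 1)(T_i + q) = 0
    (∀ (i : ℕ) (hi : i + 1 < k) (F : Lk k),
      Tdl (fun n => ⇑(s n)) i hi (Tdl (fun n => ⇑(s n)) i hi F) +
          (qL k - 1) * Tdl (fun n => ⇑(s n)) i hi F - qL k * F = 0) ∧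
    -- the braid relations
    (∀ (i : ℕ) (hi : i + 2 < k) (F : Lk k),
      Tdl (fun n => ⇑(s n)) i (Nat.lt_of_succ_lt hi)
          (Tdl (fun n => ⇑(s n)) (i + 1) hi
            (Tdl (fun n => ⇑(s n)) i (Nat.lt_of_succ_lt hi) F)) =
        Tdl (fun n => ⇑(s n)) (i + 1) hi
          (Tdl (fun n => ⇑(s n)) i (Nat.lt_of_succ_lt hi)
            (Tdl (fun n => ⇑(s n)) (i + 1) hi F))) ∧
    -- commutation for |i − j| > 1
    (∀ (i j : ℕ) (hi : i + 1 < k) (hj : j + 1 < k), (i + 1 < j ∨ j + 1 < i) →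
      ∀ F : Lk k,
        Tdl (fun n => ⇑(s n)) i hi (Tdl (fun n => ⇑(s n)) j hj F) =
          Tdl (fun n => ⇑(s n)) j hj (Tdl (fun n => ⇑(s n)) i hi F)) ∧
    -- invertibility: T_i⁻¹ = q⁻¹ (T_i + q − 1)
    (∀ (i : ℕ) (hi : i + 1 < k) (F : Lk k),
      Tdl (fun n => ⇑(s n)) i hi
          ((qL k)⁻¹ * (Tdl (fun n => ⇑(s n)) i hi F + (qL k - 1) * F)) = F ∧
      (qL k)⁻¹ * (Tdl (fun n => ⇑(s n)) i hi (Tdl (fun n => ⇑(s n)) i hi F) +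
          (qL k - 1) * Tdl (fun n => ⇑(s n)) i hi F) = F) := by
  have hs' : SwapsAdjacent s := hs
  refine ⟨fun i hi a F G => ?_, fun i hi F => sub_eq_zero.mpr (Tdl_hecke hs' i hi F),
    Tdl_braid hs', Tdl_comm hs',
    fun i hi F => demazureLusztig_inverse qL_ne_zero (s i).apply_qL (Tdl_hecke hs' i hi F)⟩
  rw [Tdl_eq_demazureLusztig, demazureLusztig_add,
    demazureLusztig_mul_of_apply_eq ((s i).commutes a)]

/-- The operators `T_1,…,T_{k−1}` (indexed here by `0 ≤ i < k−1`) are `K`-linear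
operators on `L` satisfying the Hecke quadratic relation `(T_i − 1)(T_i + q) = 0`,
the braid relations, and the commutation relations `T_i T_j = T_j T_i` for `|i−j| > 1`;
each `T_i` is invertible with `T_i⁻¹ = q⁻¹(T_i + q − 1)`. -/
theorem Tdl_hecke_braid_relations (k : ℕ) (hk : 2 ≤ k)
    (s : ℕ → (Lk k ≃ₐ[Kq] Lk k))
    (hs : ∀ (i : ℕ) (hi : i + 1 < k) (j : Fin k),
      s i (yy j) = yy (Equiv.swap ⟨i, Nat.lt_of_succ_lt hi⟩ ⟨i + 1, hi⟩ j)) :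
    -- K-linearity
    (∀ (i : ℕ) (hi : i + 1 < k) (a : Kq) (F G : Lk k),
      Tdl (fun n => ⇑(s n)) i hi (algebraMap Kq (Lk k) a * F + G) =
        algebraMap Kq (Lk k) a * Tdl (fun n => ⇑(s n)) i hi F +
          Tdl (fun n => ⇑(s n)) i hi G) ∧
    -- the Hecke quadratic relation (T_i − 1)(T_i + q) = 0
    (∀ (i : ℕ) (hi : i + 1 < k) (F : Lk k),
      Tdl (fun n => ⇑(s n)) i hi (Tdl (fun n => ⇑(s n)) i hi F) +
          (qL k - 1) * Tdl (fun n => ⇑(s n)) i hi F - qL k * F = 0) ∧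
    -- the braid relations
    (∀ (i : ℕ) (hi : i + 2 < k) (F : Lk k),
      Tdl (fun n => ⇑(s n)) i (Nat.lt_of_succ_lt hi)
          (Tdl (fun n => ⇑(s n)) (i + 1) hi
            (Tdl (fun n => ⇑(s n)) i (Nat.lt_of_succ_lt hi) F)) =
        Tdl (fun n => ⇑(s n)) (i + 1) hi
          (Tdl (fun n => ⇑(s n)) i (Nat.lt_of_succ_lt hi)
            (Tdl (fun n => ⇑(s n)) (i + 1) hi F))) ∧
    -- commutation for |i − j| > 1
    (∀ (i j : ℕ) (hi : i + 1 < k) (hj : j + 1 < k), (i + 1 < j ∨ j + 1 < i) →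
      ∀ F : Lk k,
        Tdl (fun n => ⇑(s n)) i hi (Tdl (fun n => ⇑(s n)) j hj F) =
          Tdl (fun n => ⇑(s n)) j hj (Tdl (fun n => ⇑(s n)) i hi F)) ∧
    -- invertibility: T_i⁻¹ = q⁻¹ (T_i + q − 1)
    (∀ (i : ℕ) (hi : i + 1 < k) (F : Lk k),
      Tdl (fun n => ⇑(s n)) i hi
          ((qL k)⁻¹ * (Tdl (fun n => ⇑(s n)) i hi F + (qL k - 1) * F)) = F ∧
      (qL k)⁻¹ * (Tdl (fun n => ⇑(s n)) i hi (Tdl (fun n => ⇑(s n)) i hi F) +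
          (qL k - 1) * Tdl (fun n => ⇑(s n)) i hi F) = F) :=
  Tdl_hecke_braid_relations_general k s hs
end
end

section
/- Define D_+ := −(qt)^{-1}·z_1·d_+ : V_k → V_{k+1} (where z_1 acts on V_{k+1}). Then (T_i, d_−, D_+) again satisfy the defining relations of an action of 𝔸_q: T_1 D_+² = D_+²; D_+ T_i = T_{i+1} D_+ for 1 ≤ i ≤ k−1; d_−(D_+d_− − d_−D_+)T_{k−1} = q(D_+d_− − d_−D_+)d_− for k ≥ 2; and T_1(D_+d_− − d_−D_+)D_+ = q·D_+(D_+d_− − d_−D_+) for k ≥ 1. Moreover the pair consisting of (T_i, d_−, D_+) and the original (T_i^{-1}, d_−, d_+*) is again correctly intertwined: setting Y_1 := (1/(q^{k−1}(q−1)))(D_+d_− − d_−D_+)T_{k↘1} and Y_{i+1} := q·T_i^{-1} Y_i T_i^{-1} on V_k, one has D_+ z_i = z_{i+1} D_+ and d_+* Y_i = Y_{i+1} d_+* for 1 ≤ i ≤ k, and z_1 D_+ = −t·q^{k+1}·Y_1·d_+* as maps V_k → V_{k+1}. -/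
noncomputable section

open LinearMap

/-- `T_i⁻¹ = q⁻¹ (T_i + (q − 1))`, the inverse of a Hecke operator. -/
def heckeInv {F : Type*} [Field F] (q : F) {M : Type*} [AddCommGroup M] [Module F M]
    (t : Module.End F M) : Module.End F M :=
  q⁻¹ • (t + (q - 1) • (1 : Module.End F M))

/-- `TdownTo1 T j = T_{j↘1} = T_{j−1} T_{j−2} ⋯ T_1`. -/
def TdownTo1 {M : Type*} [Monoid M] (T : ℕ → M) : ℕ → M
  | 0 => 1
  | 1 => 1
  | j + 2 => T (j + 1) * TdownTo1 T (j + 1)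

/-- `TupFrom1 T j = T_{1↗j} = T_1 T_2 ⋯ T_{j−1}`. -/
def TupFrom1 {M : Type*} [Monoid M] (T : ℕ → M) : ℕ → M
  | 0 => 1
  | 1 => 1
  | j + 2 => TupFrom1 T (j + 1) * T (j + 1)

/-- The commutator `d₊d₋ − d₋d₊` as an operator on `V (m+1)`. -/
def commDD {F : Type*} [Field F] (V : ℕ → Type*) [∀ k, AddCommGroup (V k)]
    [∀ k, Module F (V k)] (dm : ∀ k, V (k + 1) →ₗ[F] V k)
    (dp : ∀ k, V k →ₗ[F] V (k + 1)) (m : ℕ) : Module.End F (V (m + 1)) :=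
  dp m ∘ₗ dm m - dm (m + 1) ∘ₗ dp (m + 1)

/-- The operators `y_i` on `V (m+1)`:
`y_1 = (q^{k−1}(q−1))⁻¹ (d₊d₋ − d₋d₊) T_{k↘1}` (with `k = m+1`) and
`y_{i+1} = q T_i⁻¹ y_i T_i⁻¹`. -/
def yOp {F : Type*} [Field F] (q : F) (V : ℕ → Type*) [∀ k, AddCommGroup (V k)]
    [∀ k, Module F (V k)] (T : ∀ k, ℕ → Module.End F (V k))
    (dm : ∀ k, V (k + 1) →ₗ[F] V k) (dp : ∀ k, V k →ₗ[F] V (k + 1)) (m : ℕ) :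
    ℕ → Module.End F (V (m + 1))
  | 0 => 1
  | 1 => (q ^ m * (q - 1))⁻¹ • (commDD V dm dp m * TdownTo1 (T (m + 1)) (m + 1))
  | i + 2 => q • (heckeInv q (T (m + 1) (i + 1)) * yOp q V T dm dp m (i + 1) *
      heckeInv q (T (m + 1) (i + 1)))

/-- The operators `z_i` on `V (m+1)`:
`z_1 = (q^k/(1−q)) (d₊*d₋ − d₋d₊*) T*_{k↘1}` (with `k = m+1`) and
`z_{i+1} = q⁻¹ T_i z_i T_i`. -/
def zOp {F : Type*} [Field F] (q : F) (V : ℕ → Type*) [∀ k, AddCommGroup (V k)]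
    [∀ k, Module F (V k)] (T : ∀ k, ℕ → Module.End F (V k))
    (dm : ∀ k, V (k + 1) →ₗ[F] V k) (dps : ∀ k, V k →ₗ[F] V (k + 1)) (m : ℕ) :
    ℕ → Module.End F (V (m + 1))
  | 0 => 1
  | 1 => (q ^ (m + 1) / (1 - q)) •
      (commDD V dm dps m * TdownTo1 (fun i => heckeInv q (T (m + 1) i)) (m + 1))
  | i + 2 => q⁻¹ • (T (m + 1) (i + 1) * zOp q V T dm dps m (i + 1) * T (m + 1) (i + 1))

/-- The defining relations of an action of the Dyck path algebra `𝔸_q` on the family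
`V_k`, for operators `T_i : V_k → V_k` (`1 ≤ i ≤ k−1`), `d₋ : V_{k+1} → V_k`,
`d₊ : V_k → V_{k+1}`. -/
def AqRel {F : Type*} [Field F] (q : F) (V : ℕ → Type*) [∀ k, AddCommGroup (V k)]
    [∀ k, Module F (V k)] (T : ∀ k, ℕ → Module.End F (V k))
    (dm : ∀ k, V (k + 1) →ₗ[F] V k) (dp : ∀ k, V k →ₗ[F] V (k + 1)) : Prop :=
  (∀ k i, 1 ≤ i → i + 1 ≤ k →
    (T k i - 1) * (T k i + q • (1 : Module.End F (V k))) = 0) ∧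
  (∀ k i, 1 ≤ i → i + 2 ≤ k →
    T k i * T k (i + 1) * T k i = T k (i + 1) * T k i * T k (i + 1)) ∧
  (∀ k i j, 1 ≤ i → i + 1 ≤ k → 1 ≤ j → j + 1 ≤ k → i + 1 < j →
    T k i * T k j = T k j * T k i) ∧
  (∀ m, dm m ∘ₗ dm (m + 1) ∘ₗ (T (m + 2) (m + 1) : V (m + 2) →ₗ[F] V (m + 2)) =
    dm m ∘ₗ dm (m + 1)) ∧
  (∀ m i, 1 ≤ i → i ≤ m →
    (T (m + 1) i : V (m + 1) →ₗ[F] V (m + 1)) ∘ₗ dm (m + 1) =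
      dm (m + 1) ∘ₗ (T (m + 2) i : V (m + 2) →ₗ[F] V (m + 2))) ∧
  (∀ m, (T (m + 2) 1 : V (m + 2) →ₗ[F] V (m + 2)) ∘ₗ dp (m + 1) ∘ₗ dp m =
    dp (m + 1) ∘ₗ dp m) ∧
  (∀ m i, 1 ≤ i → i ≤ m →
    dp (m + 1) ∘ₗ (T (m + 1) i : V (m + 1) →ₗ[F] V (m + 1)) =
      (T (m + 2) (i + 1) : V (m + 2) →ₗ[F] V (m + 2)) ∘ₗ dp (m + 1)) ∧
  (∀ m, dm (m + 1) ∘ₗ (commDD V dm dp (m + 1) : V (m + 2) →ₗ[F] V (m + 2)) ∘ₗ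
      (T (m + 2) (m + 1) : V (m + 2) →ₗ[F] V (m + 2)) =
    q • ((commDD V dm dp m : V (m + 1) →ₗ[F] V (m + 1)) ∘ₗ dm (m + 1))) ∧
  (∀ m, (T (m + 2) 1 : V (m + 2) →ₗ[F] V (m + 2)) ∘ₗ
      (commDD V dm dp (m + 1) : V (m + 2) →ₗ[F] V (m + 2)) ∘ₗ dp (m + 1) =
    q • (dp (m + 1) ∘ₗ (commDD V dm dp m : V (m + 1) →ₗ[F] V (m + 1))))

/-- The intertwining relations between an action of `𝔸_q` (with `d₊`) and an action of
`𝔸_{q⁻¹}` (with `d₊*`): `d₊ z_i = z_{i+1} d₊`, `d₊* y_i = y_{i+1} d₊*` for `1 ≤ i ≤ k`,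
and `z_1 d₊ = −t q^{k+1} y_1 d₊* : V_k → V_{k+1}`. -/
def IntertwineRel {F : Type*} [Field F] (q t : F) (V : ℕ → Type*)
    [∀ k, AddCommGroup (V k)] [∀ k, Module F (V k)]
    (T : ∀ k, ℕ → Module.End F (V k)) (dm : ∀ k, V (k + 1) →ₗ[F] V k)
    (dp dps : ∀ k, V k →ₗ[F] V (k + 1)) : Prop :=
  (∀ m i, 1 ≤ i → i ≤ m + 1 →
    dp (m + 1) ∘ₗ (zOp q V T dm dps m i : V (m + 1) →ₗ[F] V (m + 1)) =
      (zOp q V T dm dps (m + 1) (i + 1) : V (m + 2) →ₗ[F] V (m + 2)) ∘ₗ dp (m + 1)) ∧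
  (∀ m i, 1 ≤ i → i ≤ m + 1 →
    dps (m + 1) ∘ₗ (yOp q V T dm dp m i : V (m + 1) →ₗ[F] V (m + 1)) =
      (yOp q V T dm dp (m + 1) (i + 1) : V (m + 2) →ₗ[F] V (m + 2)) ∘ₗ dps (m + 1)) ∧
  (∀ m, (zOp q V T dm dps m 1 : V (m + 1) →ₗ[F] V (m + 1)) ∘ₗ dp m =
    (-(t * q ^ (m + 1))) •
      ((yOp q V T dm dp m 1 : V (m + 1) →ₗ[F] V (m + 1)) ∘ₗ dps m))

/-- A pair of correctly intertwined actions of `𝔸_q` and `𝔸_{q⁻¹}`: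
`(T, d₋, d₊)` satisfies the relations of `𝔸_q`, `(T⁻¹, d₋, d₊*)` satisfies the relations
of `𝔸_{q⁻¹}`, and the two are correctly intertwined. -/
def CorrectlyIntertwined {F : Type*} [Field F] (q t : F) (V : ℕ → Type*)
    [∀ k, AddCommGroup (V k)] [∀ k, Module F (V k)]
    (T : ∀ k, ℕ → Module.End F (V k)) (dm : ∀ k, V (k + 1) →ₗ[F] V k)
    (dp dps : ∀ k, V k →ₗ[F] V (k + 1)) : Prop :=
  AqRel q V T dm dp ∧
  AqRel q⁻¹ V (fun k i => heckeInv q (T k i)) dm dps ∧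
  IntertwineRel q t V T dm dp dps

/-- The field `ℚ(q,t)` of rational functions in two variables over `ℚ`. -/
abbrev Fqt : Type := FractionRing (MvPolynomial (Fin 2) ℚ)

/-- The element `q` of `ℚ(q,t)`. -/
def qv : Fqt := algebraMap (MvPolynomial (Fin 2) ℚ) Fqt (MvPolynomial.X 0)

/-- The element `t` of `ℚ(q,t)`. -/
def tv : Fqt := algebraMap (MvPolynomial (Fin 2) ℚ) Fqt (MvPolynomial.X 1)


/-!
The operators `z_i` of the `𝔸_{q⁻¹}`-action are exactly its `y_i`-operators, so every fact about
the `y_i` of an action also holds for the `z_i`: `d₋` commutes with them and `z₁` commutes with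
`T_i` for `i ≥ 2`. Hence `D₊ = −(qt)⁻¹ z₁ d₊` satisfies `D₊ T_i = T_{i+1} D₊` and
`[D₊, d₋] = −(qt)⁻¹ z₁ [d₊, d₋]`, which gives `Y₁ = −(qt)⁻¹ z₁ y₁`. The remaining relations reduce
to `z₁ z_j d₊ = z_j z₁ d₊`. For `j = 2`, trade `z₁ d₊` for `−t q^{k+1} y₁ d₊*` and push `z₁ T₁`
through `y₁`, which turns it into `y₂` because `[d₊*, d₋] y₁ = y₂ [d₊*, d₋]` and the `T_i⁻¹`,
`i ≥ 2`, commute with `y₁`. For larger `j`, conjugate by `T_{j−1}`.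
-/

section Hecke

variable {F : Type*} [Field F] {q : F} {M : Type*} [AddCommGroup M] [Module F M]
  {A : Module.End F M}

theorem heckeInv_mul_self (hq : q ≠ 0) (hA : (A - 1) * (A + q • 1) = 0) :
    heckeInv q A * A = 1 := by
  have key : (A + (q - 1) • 1) * A = q • 1 + (A - 1) * (A + q • 1) := by
    simp only [add_mul, sub_mul, mul_add, smul_mul_assoc, mul_smul_comm, one_mul, mul_one]
    module
  rw [heckeInv, smul_mul_assoc, key, hA, add_zero, smul_smul, inv_mul_cancel₀ hq, one_smul]

theorem mul_heckeInv_self (hq : q ≠ 0) (hA : (A - 1) * (A + q • 1) = 0) :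
    A * heckeInv q A = 1 := by
  have hcomm : Commute A (heckeInv q A) :=
    ((Commute.refl A).add_right ((Commute.one_right A).smul_right _)).smul_right _
  rw [hcomm.eq, heckeInv_mul_self hq hA]

theorem heckeInv_heckeInv (hq : q ≠ 0) (A : Module.End F M) :
    heckeInv q⁻¹ (heckeInv q A) = A := by
  simp only [heckeInv, inv_inv, smul_add, smul_smul]
  match_scalars
  · field_simp
  · field_simp
    ring

theorem Commute.heckeInv_left {B : Module.End F M} (h : Commute A B) : Commute (heckeInv q A) B :=
  (h.add_left ((Commute.one_left B).smul_left _)).smul_left _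

theorem map_heckeInv_apply {N : Type*} [AddCommGroup N] [Module F N] (f : M →ₗ[F] N)
    {B : Module.End F N} (hf : ∀ x, f (A x) = B (f x)) (x : M) :
    f (heckeInv q A x) = heckeInv q B (f x) := by
  simp [heckeInv, hf]

end Hecke

section TdownTo1

theorem TdownTo1_succ {M : Type*} [Monoid M] (f : ℕ → M) {n : ℕ} (hn : 1 ≤ n) :
    TdownTo1 f (n + 1) = f n * TdownTo1 f n := by
  obtain ⟨n, rfl⟩ := Nat.exists_eq_add_of_le' hn
  rfl

theorem TdownTo1_add_two {M : Type*} [Monoid M] (f : ℕ → M) :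
    ∀ n, TdownTo1 f (n + 2) = TdownTo1 (fun i => f (i + 1)) (n + 1) * f 1
  | 0 => by simp [TdownTo1]
  | n + 1 => by
    rw [TdownTo1_succ f (n := n + 2) (by omega), TdownTo1_add_two f n, ← mul_assoc]
    rfl

theorem Commute.TdownTo1_left {M : Type*} [Monoid M] (f : ℕ → M) {a : M} :
    ∀ n, (∀ i, 1 ≤ i → i + 1 ≤ n → Commute (f i) a) → Commute (TdownTo1 f n) a
  | 0, _ | 1, _ => Commute.one_left a
  | n + 2, hc => (hc (n + 1) (by omega) le_rfl).mul_left
      (Commute.TdownTo1_left f (n + 1) fun i h1 h2 => hc i h1 (by omega))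

theorem map_TdownTo1_apply {R M N : Type*} [Semiring R] [AddCommMonoid M] [Module R M]
    [AddCommMonoid N] [Module R N] (g : M →ₗ[R] N) {A : ℕ → Module.End R M}
    {B : ℕ → Module.End R N} :
    ∀ n, (∀ i, 1 ≤ i → i + 1 ≤ n → ∀ x, g (A i x) = B i (g x)) →
      ∀ x, g (TdownTo1 A n x) = TdownTo1 B n (g x)
  | 0, _, _ | 1, _, _ => rfl
  | n + 2, h, x => by
    change g (A (n + 1) (TdownTo1 A (n + 1) x)) = B (n + 1) (TdownTo1 B (n + 1) (g x))
    rw [h (n + 1) (by omega) le_rfl,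
      map_TdownTo1_apply g (n + 1) (fun i h1 h2 => h i h1 (by omega)) x]

end TdownTo1

theorem inv_pow_succ_mul_sub_one_mul {F : Type*} [Field F] {q : F} (hq : q ≠ 0) (m : ℕ) :
    (q ^ (m + 1) * (q - 1))⁻¹ * q = (q ^ m * (q - 1))⁻¹ := by
  rw [pow_succ, mul_right_comm, mul_inv, mul_assoc, inv_mul_cancel₀ hq, mul_one]

namespace AqRel

variable {F : Type*} [Field F] {q : F} {V : ℕ → Type*} [∀ k, AddCommGroup (V k)]
  [∀ k, Module F (V k)] {T : ∀ k, ℕ → Module.End F (V k)}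
  {dm : ∀ k, V (k + 1) →ₗ[F] V k} {dp : ∀ k, V k →ₗ[F] V (k + 1)}

theorem heckeInv_T_apply (hA : AqRel q V T dm dp) (hq : q ≠ 0) {k i : ℕ} (h1 : 1 ≤ i)
    (h2 : i + 1 ≤ k) (x : V k) : heckeInv q (T k i) (T k i x) = x := by
  simpa using LinearMap.congr_fun (heckeInv_mul_self hq (hA.1 k i h1 h2)) x

theorem T_heckeInv_apply (hA : AqRel q V T dm dp) (hq : q ≠ 0) {k i : ℕ} (h1 : 1 ≤ i)
    (h2 : i + 1 ≤ k) (x : V k) : T k i (heckeInv q (T k i) x) = x := by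
  simpa using LinearMap.congr_fun (mul_heckeInv_self hq (hA.1 k i h1 h2)) x

theorem T_dm_apply (hA : AqRel q V T dm dp) (m i : ℕ) (h1 : 1 ≤ i) (h2 : i ≤ m)
    (x : V (m + 2)) : T (m + 1) i (dm (m + 1) x) = dm (m + 1) (T (m + 2) i x) := by
  simpa using LinearMap.congr_fun (hA.2.2.2.2.1 m i h1 h2) x

theorem T_dp_dp_apply (hA : AqRel q V T dm dp) (m : ℕ) (x : V m) :
    T (m + 2) 1 (dp (m + 1) (dp m x)) = dp (m + 1) (dp m x) := by
  simpa using LinearMap.congr_fun (hA.2.2.2.2.2.1 m) x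

theorem dp_T_apply (hA : AqRel q V T dm dp) (m i : ℕ) (h1 : 1 ≤ i) (h2 : i ≤ m)
    (x : V (m + 1)) : dp (m + 1) (T (m + 1) i x) = T (m + 2) (i + 1) (dp (m + 1) x) := by
  simpa using LinearMap.congr_fun (hA.2.2.2.2.2.2.1 m i h1 h2) x

theorem dm_commDD_T_apply (hA : AqRel q V T dm dp) (m : ℕ) (x : V (m + 2)) :
    dm (m + 1) (commDD V dm dp (m + 1) (T (m + 2) (m + 1) x)) =
      q • commDD V dm dp m (dm (m + 1) x) := by
  simpa using LinearMap.congr_fun (hA.2.2.2.2.2.2.2.1 m) x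

theorem T_commDD_dp_apply (hA : AqRel q V T dm dp) (m : ℕ) (x : V (m + 1)) :
    T (m + 2) 1 (commDD V dm dp (m + 1) (dp (m + 1) x)) =
      q • dp (m + 1) (commDD V dm dp m x) := by
  simpa using LinearMap.congr_fun (hA.2.2.2.2.2.2.2.2 m) x

theorem T_mul_TdownTo1 (hA : AqRel q V T dm dp) {K i n : ℕ} (hi : 1 ≤ i) (hin : i + 2 ≤ n)
    (hn : n ≤ K) : T K i * TdownTo1 (T K) n = TdownTo1 (T K) n * T K (i + 1) := by
  obtain ⟨-, hbraid, hfar, -⟩ := hA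
  induction n, hin using Nat.le_induction with
  | base =>
    have hcomm : Commute (TdownTo1 (T K) i) (T K (i + 1)) :=
      Commute.TdownTo1_left _ i fun j hj1 hj2 =>
        hfar K j (i + 1) hj1 (by omega) (by omega) (by omega) (by omega)
    rw [TdownTo1_succ _ (by omega : 1 ≤ i + 1), TdownTo1_succ _ hi]
    calc T K i * (T K (i + 1) * (T K i * TdownTo1 (T K) i))
        = (T K i * T K (i + 1) * T K i) * TdownTo1 (T K) i := by simp only [mul_assoc]
      _ = T K (i + 1) * T K i * (T K (i + 1) * TdownTo1 (T K) i) := by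
        rw [hbraid K i hi (by omega)]; simp only [mul_assoc]
      _ = T K (i + 1) * T K i * (TdownTo1 (T K) i * T K (i + 1)) := by rw [hcomm.eq]
      _ = T K (i + 1) * (T K i * TdownTo1 (T K) i) * T K (i + 1) := by simp only [mul_assoc]
  | succ n hin ih =>
    rw [TdownTo1_succ _ (by omega : 1 ≤ n), ← mul_assoc,
      hfar K i n hi (by omega) (by omega) (by omega) (by omega), mul_assoc, ih (by omega),
      mul_assoc]

theorem T_mul_commDD (hA : AqRel q V T dm dp) (m i : ℕ) (h1 : 1 ≤ i) (h2 : i ≤ m) :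
    T (m + 2) (i + 1) * commDD V dm dp (m + 1) = commDD V dm dp (m + 1) * T (m + 2) i := by
  ext x
  simp only [commDD, Module.End.mul_apply, LinearMap.sub_apply, LinearMap.comp_apply, map_sub]
  rw [← hA.dp_T_apply m i h1 h2, hA.T_dm_apply m i h1 h2,
    hA.T_dm_apply (m + 1) (i + 1) (by omega) (by omega), ← hA.dp_T_apply (m + 1) i h1 (by omega)]

theorem commute_T_yOp_one (hA : AqRel q V T dm dp) (m i : ℕ) (h1 : 1 ≤ i) (h2 : i ≤ m) :
    Commute (T (m + 2) (i + 1)) (yOp q V T dm dp (m + 1) 1) := by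
  simp only [Commute, SemiconjBy, yOp]
  rw [mul_smul_comm, smul_mul_assoc, ← mul_assoc, hA.T_mul_commDD m i h1 h2, mul_assoc,
    hA.T_mul_TdownTo1 h1 (by omega) le_rfl, mul_assoc]

theorem dm_yOp_apply (hA : AqRel q V T dm dp) (hq : q ≠ 0) (m : ℕ) :
    ∀ i, 1 ≤ i → i ≤ m + 1 → ∀ x : V (m + 2),
      dm (m + 1) (yOp q V T dm dp (m + 1) i x) = yOp q V T dm dp m i (dm (m + 1) x)
  | 1, _, _, x => by
    simp only [yOp, LinearMap.smul_apply, Module.End.mul_apply, map_smul]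
    rw [TdownTo1_succ _ (by omega : 1 ≤ m + 1), Module.End.mul_apply, hA.dm_commDD_T_apply,
      map_TdownTo1_apply (dm (m + 1)) (m + 1)
        (fun i h1 h2 x => (hA.T_dm_apply m i h1 (by omega) x).symm),
      smul_smul, inv_pow_succ_mul_sub_one_mul hq]
  | i + 2, _, hi, x => by
    have hdm : ∀ x, dm (m + 1) (T (m + 2) (i + 1) x) = T (m + 1) (i + 1) (dm (m + 1) x) :=
      fun x => (hA.T_dm_apply m (i + 1) (by omega) (by omega) x).symm
    simp only [yOp, LinearMap.smul_apply, Module.End.mul_apply, map_smul]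
    rw [map_heckeInv_apply _ hdm, hA.dm_yOp_apply hq m (i + 1) (by omega) (by omega),
      map_heckeInv_apply _ hdm]

theorem dp_yOp_one_apply (hA : AqRel q V T dm dp) (hq : q ≠ 0) (m : ℕ) (x : V (m + 1)) :
    dp (m + 1) (yOp q V T dm dp m 1 x) =
      T (m + 2) 1 (yOp q V T dm dp (m + 1) 1 (heckeInv q (T (m + 2) 1) (dp (m + 1) x))) := by
  simp only [yOp, LinearMap.smul_apply, Module.End.mul_apply, map_smul]
  rw [TdownTo1_add_two, Module.End.mul_apply, hA.T_heckeInv_apply hq le_rfl (by omega),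
    ← map_TdownTo1_apply (dp (m + 1)) (m + 1)
      (fun i h1 h2 x => hA.dp_T_apply m i h1 (by omega) x),
    hA.T_commDD_dp_apply, smul_smul, inv_pow_succ_mul_sub_one_mul hq]

theorem heckeInv_dp_yOp_one_apply (hA : AqRel q V T dm dp) (hq : q ≠ 0) (m : ℕ)
    (x : V (m + 1)) :
    heckeInv q (T (m + 2) 1) (dp (m + 1) (yOp q V T dm dp m 1 x)) =
      yOp q V T dm dp (m + 1) 1 (heckeInv q (T (m + 2) 1) (dp (m + 1) x)) := by
  rw [hA.dp_yOp_one_apply hq, hA.heckeInv_T_apply hq le_rfl (by omega)]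

theorem T_yOp_two_apply (hA : AqRel q V T dm dp) (hq : q ≠ 0) (m : ℕ) (x : V (m + 2)) :
    T (m + 2) 1 (yOp q V T dm dp (m + 1) 2 x) =
      q • yOp q V T dm dp (m + 1) 1 (heckeInv q (T (m + 2) 1) x) := by
  simp only [yOp.eq_3, zero_add, LinearMap.smul_apply, Module.End.mul_apply, map_smul]
  rw [hA.T_heckeInv_apply hq le_rfl (by omega)]

end AqRel

section Dual

variable {F : Type*} [Field F] {q : F} {V : ℕ → Type*} [∀ k, AddCommGroup (V k)]
  [∀ k, Module F (V k)] {T : ∀ k, ℕ → Module.End F (V k)}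
  {dm : ∀ k, V (k + 1) →ₗ[F] V k} {dp dps : ∀ k, V k →ₗ[F] V (k + 1)}

theorem zOp_eq_yOp (hq : q ≠ 0) (m : ℕ) :
    ∀ i, zOp q V T dm dps m i = yOp q⁻¹ V (fun k j => heckeInv q (T k j)) dm dps m i
  | 0 => rfl
  | 1 => by
    have hcoeff : (q⁻¹ ^ m * (q⁻¹ - 1))⁻¹ = q ^ (m + 1) / (1 - q) := by
      rw [show q⁻¹ - 1 = q⁻¹ * (1 - q) by field_simp, ← mul_assoc, ← pow_succ, mul_inv,
        inv_pow, inv_inv, div_eq_mul_inv]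
    simp only [zOp, yOp, hcoeff]
  | i + 2 => by
    simp only [zOp, yOp, heckeInv_heckeInv hq, zOp_eq_yOp hq m (i + 1)]

theorem dm_zOp_apply (hA' : AqRel q⁻¹ V (fun k j => heckeInv q (T k j)) dm dps) (hq : q ≠ 0)
    (m i : ℕ) (h1 : 1 ≤ i) (h2 : i ≤ m + 1) (x : V (m + 2)) :
    dm (m + 1) (zOp q V T dm dps (m + 1) i x) = zOp q V T dm dps m i (dm (m + 1) x) := by
  simpa only [zOp_eq_yOp hq] using hA'.dm_yOp_apply (inv_ne_zero hq) m i h1 h2 x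

theorem commute_T_zOp_one (hA' : AqRel q⁻¹ V (fun k j => heckeInv q (T k j)) dm dps)
    (hq : q ≠ 0) (m i : ℕ) (h1 : 1 ≤ i) (h2 : i ≤ m) :
    Commute (T (m + 2) (i + 1)) (zOp q V T dm dps (m + 1) 1) := by
  simpa only [heckeInv_heckeInv hq, zOp_eq_yOp hq] using
    (hA'.commute_T_yOp_one m i h1 h2).heckeInv_left (q := q⁻¹)

theorem T_dps_zOp_one_apply (hA' : AqRel q⁻¹ V (fun k j => heckeInv q (T k j)) dm dps)
    (hq : q ≠ 0) (m : ℕ) (x : V (m + 1)) :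
    T (m + 2) 1 (dps (m + 1) (zOp q V T dm dps m 1 x)) =
      zOp q V T dm dps (m + 1) 1 (T (m + 2) 1 (dps (m + 1) x)) := by
  simpa only [heckeInv_heckeInv hq, zOp_eq_yOp hq] using
    hA'.heckeInv_dp_yOp_one_apply (inv_ne_zero hq) m x

theorem dps_zOp_one_apply (hA' : AqRel q⁻¹ V (fun k j => heckeInv q (T k j)) dm dps)
    (hq : q ≠ 0) (m : ℕ) (x : V (m + 1)) :
    dps (m + 1) (zOp q V T dm dps m 1 x) =
      heckeInv q (T (m + 2) 1) (zOp q V T dm dps (m + 1) 1 (T (m + 2) 1 (dps (m + 1) x))) := by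
  simpa only [heckeInv_heckeInv hq, zOp_eq_yOp hq] using hA'.dp_yOp_one_apply (inv_ne_zero hq) m x

theorem T_zOp_one_zOp_two_apply (m : ℕ) (x : V (m + 2)) :
    T (m + 2) 1 (zOp q V T dm dps (m + 1) 1 (zOp q V T dm dps (m + 1) 2 x)) =
      zOp q V T dm dps (m + 1) 2 (zOp q V T dm dps (m + 1) 1 (T (m + 2) 1 x)) := by
  simp only [zOp.eq_3, zero_add, LinearMap.smul_apply, Module.End.mul_apply, map_smul]

theorem zOp_one_mul_T_one (hA : AqRel q V T dm dp) (hq : q ≠ 0) (m : ℕ) :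
    zOp q V T dm dps (m + 1) 1 * T (m + 2) 1 = (q ^ (m + 2) / (1 - q)) •
      (commDD V dm dps (m + 1) * TdownTo1 (fun i => heckeInv q (T (m + 2) (i + 1))) (m + 1)) := by
  rw [zOp, TdownTo1_add_two, smul_mul_assoc, mul_assoc, mul_assoc,
    heckeInv_mul_self hq (hA.1 (m + 2) 1 le_rfl (by omega)), mul_one]

end Dual

namespace IntertwineRel

variable {F : Type*} [Field F] {q t : F} {V : ℕ → Type*} [∀ k, AddCommGroup (V k)]
  [∀ k, Module F (V k)] {T : ∀ k, ℕ → Module.End F (V k)}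
  {dm : ∀ k, V (k + 1) →ₗ[F] V k} {dp dps : ∀ k, V k →ₗ[F] V (k + 1)}

theorem dp_zOp_apply (hI : IntertwineRel q t V T dm dp dps) (m i : ℕ) (h1 : 1 ≤ i)
    (h2 : i ≤ m + 1) (x : V (m + 1)) :
    dp (m + 1) (zOp q V T dm dps m i x) = zOp q V T dm dps (m + 1) (i + 1) (dp (m + 1) x) := by
  simpa using LinearMap.congr_fun (hI.1 m i h1 h2) x

theorem dps_yOp_apply (hI : IntertwineRel q t V T dm dp dps) (m i : ℕ) (h1 : 1 ≤ i)
    (h2 : i ≤ m + 1) (x : V (m + 1)) :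
    dps (m + 1) (yOp q V T dm dp m i x) = yOp q V T dm dp (m + 1) (i + 1) (dps (m + 1) x) := by
  simpa using LinearMap.congr_fun (hI.2.1 m i h1 h2) x

theorem zOp_one_dp_apply (hI : IntertwineRel q t V T dm dp dps) (m : ℕ) (x : V m) :
    zOp q V T dm dps m 1 (dp m x) = (-(t * q ^ (m + 1))) • yOp q V T dm dp m 1 (dps m x) := by
  simpa using LinearMap.congr_fun (hI.2.2 m) x

end IntertwineRel

def replicatedDp {F : Type*} [Field F] (q t : F) (V : ℕ → Type*) [∀ k, AddCommGroup (V k)]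
    [∀ k, Module F (V k)] (T : ∀ k, ℕ → Module.End F (V k))
    (dm : ∀ k, V (k + 1) →ₗ[F] V k) (dp dps : ∀ k, V k →ₗ[F] V (k + 1)) :
    ∀ k, V k →ₗ[F] V (k + 1) :=
  fun k => (-(q * t)⁻¹) • ((zOp q V T dm dps k 1 : V (k + 1) →ₗ[F] V (k + 1)) ∘ₗ dp k)

section Replicated

variable {F : Type*} [Field F] {q t : F} {V : ℕ → Type*} [∀ k, AddCommGroup (V k)]
  [∀ k, Module F (V k)] {T : ∀ k, ℕ → Module.End F (V k)}
  {dm : ∀ k, V (k + 1) →ₗ[F] V k} {dp dps : ∀ k, V k →ₗ[F] V (k + 1)}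

theorem replicatedDp_apply (k : ℕ) (x : V k) :
    replicatedDp q t V T dm dp dps k x = (-(q * t)⁻¹) • zOp q V T dm dps k 1 (dp k x) := rfl

theorem commDD_replicatedDp_apply
    (hA' : AqRel q⁻¹ V (fun k j => heckeInv q (T k j)) dm dps) (hq : q ≠ 0) (m : ℕ)
    (x : V (m + 1)) :
    commDD V dm (replicatedDp q t V T dm dp dps) m x =
      (-(q * t)⁻¹) • zOp q V T dm dps m 1 (commDD V dm dp m x) := by
  simp only [commDD, LinearMap.sub_apply, LinearMap.comp_apply, replicatedDp_apply, map_smul,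
    map_sub, smul_sub]
  rw [dm_zOp_apply hA' hq m 1 le_rfl (by omega)]

theorem yOp_one_replicatedDp_apply
    (hA' : AqRel q⁻¹ V (fun k j => heckeInv q (T k j)) dm dps) (hq : q ≠ 0) (m : ℕ)
    (x : V (m + 1)) :
    yOp q V T dm (replicatedDp q t V T dm dp dps) m 1 x =
      (-(q * t)⁻¹) • zOp q V T dm dps m 1 (yOp q V T dm dp m 1 x) := by
  simp only [yOp, LinearMap.smul_apply, Module.End.mul_apply, commDD_replicatedDp_apply hA' hq,
    map_smul]
  rw [smul_comm]

theorem replicatedDp_T (hA : AqRel q V T dm dp)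
    (hA' : AqRel q⁻¹ V (fun k j => heckeInv q (T k j)) dm dps) (hq : q ≠ 0) (m i : ℕ)
    (h1 : 1 ≤ i) (h2 : i ≤ m) :
    replicatedDp q t V T dm dp dps (m + 1) ∘ₗ (T (m + 1) i : V (m + 1) →ₗ[F] V (m + 1)) =
      (T (m + 2) (i + 1) : V (m + 2) →ₗ[F] V (m + 2)) ∘ₗ
        replicatedDp q t V T dm dp dps (m + 1) := by
  ext x
  simp only [LinearMap.comp_apply, replicatedDp_apply, map_smul]
  rw [hA.dp_T_apply m i h1 h2]
  exact congrArg _ (LinearMap.congr_fun (commute_T_zOp_one hA' hq m i h1 h2).eq _).symm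

theorem dm_commDD_replicatedDp_T (hA : AqRel q V T dm dp)
    (hA' : AqRel q⁻¹ V (fun k j => heckeInv q (T k j)) dm dps) (hq : q ≠ 0) (m : ℕ) :
    dm (m + 1) ∘ₗ (commDD V dm (replicatedDp q t V T dm dp dps) (m + 1) :
        V (m + 2) →ₗ[F] V (m + 2)) ∘ₗ (T (m + 2) (m + 1) : V (m + 2) →ₗ[F] V (m + 2)) =
      q • ((commDD V dm (replicatedDp q t V T dm dp dps) m : V (m + 1) →ₗ[F] V (m + 1)) ∘ₗ
        dm (m + 1)) := by
  ext x
  simp only [LinearMap.comp_apply, LinearMap.smul_apply, commDD_replicatedDp_apply hA' hq,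
    map_smul]
  rw [dm_zOp_apply hA' hq m 1 le_rfl (by omega), hA.dm_commDD_T_apply, map_smul, smul_comm]

end Replicated

namespace CorrectlyIntertwined

variable {F : Type*} [Field F] {q t : F} {V : ℕ → Type*} [∀ k, AddCommGroup (V k)]
  [∀ k, Module F (V k)] {T : ∀ k, ℕ → Module.End F (V k)}
  {dm : ∀ k, V (k + 1) →ₗ[F] V k} {dp dps : ∀ k, V k →ₗ[F] V (k + 1)}

theorem commDD_zOp_one_apply (h : CorrectlyIntertwined q t V T dm dp dps) (hq : q ≠ 0) (m : ℕ)
    (x : V (m + 2)) :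
    commDD V dm dp (m + 1) (zOp q V T dm dps (m + 1) 1 x) =
      zOp q V T dm dps (m + 1) 2 (commDD V dm dp (m + 1) x) := by
  simp only [commDD, LinearMap.sub_apply, LinearMap.comp_apply, map_sub]
  rw [dm_zOp_apply h.2.1 hq m 1 le_rfl (by omega), h.2.2.dp_zOp_apply m 1 le_rfl (by omega),
    h.2.2.dp_zOp_apply (m + 1) 1 le_rfl (by omega),
    dm_zOp_apply h.2.1 hq (m + 1) 2 (by omega) (by omega)]

theorem commDD_dps_mul_yOp_one (h : CorrectlyIntertwined q t V T dm dp dps) (hq : q ≠ 0)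
    (m : ℕ) :
    commDD V dm dps (m + 1) * yOp q V T dm dp (m + 1) 1 =
      yOp q V T dm dp (m + 1) 2 * commDD V dm dps (m + 1) := by
  ext x
  simp only [commDD, Module.End.mul_apply, LinearMap.sub_apply, LinearMap.comp_apply, map_sub]
  rw [h.1.dm_yOp_apply hq m 1 le_rfl (by omega), h.2.2.dps_yOp_apply m 1 le_rfl (by omega),
    h.2.2.dps_yOp_apply (m + 1) 1 le_rfl (by omega),
    h.1.dm_yOp_apply hq (m + 1) 2 (by omega) (by omega)]

theorem zOp_one_T_one_yOp_one (h : CorrectlyIntertwined q t V T dm dp dps) (hq : q ≠ 0)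
    (m : ℕ) :
    zOp q V T dm dps (m + 1) 1 * T (m + 2) 1 * yOp q V T dm dp (m + 1) 1 =
      yOp q V T dm dp (m + 1) 2 * (zOp q V T dm dps (m + 1) 1 * T (m + 2) 1) := by
  have hcomm : Commute (TdownTo1 (fun i => heckeInv q (T (m + 2) (i + 1))) (m + 1))
      (yOp q V T dm dp (m + 1) 1) :=
    Commute.TdownTo1_left _ _ fun i h1 h2 =>
      (h.1.commute_T_yOp_one m i h1 (by omega)).heckeInv_left
  rw [zOp_one_mul_T_one h.1 hq, smul_mul_assoc, mul_smul_comm, mul_assoc, hcomm.eq, ← mul_assoc,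
    commDD_dps_mul_yOp_one h hq, mul_assoc]

theorem zOp_one_zOp_two_dp_apply (h : CorrectlyIntertwined q t V T dm dp dps) (hq : q ≠ 0)
    (m : ℕ) (x : V (m + 1)) :
    zOp q V T dm dps (m + 1) 1 (zOp q V T dm dps (m + 1) 2 (dp (m + 1) x)) =
      zOp q V T dm dps (m + 1) 2 (zOp q V T dm dps (m + 1) 1 (dp (m + 1) x)) := by
  have hkey := LinearMap.congr_fun (h.zOp_one_T_one_yOp_one hq m) (dps (m + 1) x)
  simp only [Module.End.mul_apply] at hkey
  obtain ⟨hA, hA', hI⟩ := h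
  rw [← hI.dp_zOp_apply m 1 le_rfl (by omega), hI.zOp_one_dp_apply, hI.zOp_one_dp_apply,
    map_smul]
  simp only [zOp.eq_3, zero_add, LinearMap.smul_apply, Module.End.mul_apply]
  rw [hkey, ← T_dps_zOp_one_apply hA' hq, hA.T_yOp_two_apply hq,
    hA.heckeInv_T_apply hq le_rfl (by omega), smul_smul, smul_smul, mul_assoc,
    inv_mul_cancel₀ hq, mul_one]

theorem zOp_one_zOp_dp_apply (h : CorrectlyIntertwined q t V T dm dp dps) (hq : q ≠ 0) (m : ℕ) :
    ∀ i, i ≤ m → ∀ x : V (m + 1),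
      zOp q V T dm dps (m + 1) 1 (zOp q V T dm dps (m + 1) (i + 2) (dp (m + 1) x)) =
        zOp q V T dm dps (m + 1) (i + 2) (zOp q V T dm dps (m + 1) 1 (dp (m + 1) x))
  | 0, _, x => h.zOp_one_zOp_two_dp_apply hq m x
  | i + 1, hi, x => by
    have hTz : ∀ v, T (m + 2) (i + 2) (zOp q V T dm dps (m + 1) 1 v) =
        zOp q V T dm dps (m + 1) 1 (T (m + 2) (i + 2) v) :=
      LinearMap.congr_fun (commute_T_zOp_one h.2.1 hq m (i + 1) (by omega) hi).eq
    rw [zOp.eq_3]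
    simp only [LinearMap.smul_apply, Module.End.mul_apply, map_smul]
    rw [hTz, ← h.1.dp_T_apply m (i + 1) (by omega) hi, ← hTz,
      h.zOp_one_zOp_dp_apply hq m i (by omega)]

theorem T_replicatedDp_replicatedDp (h : CorrectlyIntertwined q t V T dm dp dps) (hq : q ≠ 0)
    (m : ℕ) :
    (T (m + 2) 1 : V (m + 2) →ₗ[F] V (m + 2)) ∘ₗ replicatedDp q t V T dm dp dps (m + 1) ∘ₗ
        replicatedDp q t V T dm dp dps m =
      replicatedDp q t V T dm dp dps (m + 1) ∘ₗ replicatedDp q t V T dm dp dps m := by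
  ext x
  simp only [LinearMap.comp_apply, replicatedDp_apply, map_smul]
  rw [h.2.2.dp_zOp_apply m 1 le_rfl (by omega), T_zOp_one_zOp_two_apply, h.1.T_dp_dp_apply,
    h.zOp_one_zOp_two_dp_apply hq]

theorem T_commDD_replicatedDp_replicatedDp (h : CorrectlyIntertwined q t V T dm dp dps)
    (hq : q ≠ 0) (m : ℕ) :
    (T (m + 2) 1 : V (m + 2) →ₗ[F] V (m + 2)) ∘ₗ
        (commDD V dm (replicatedDp q t V T dm dp dps) (m + 1) : V (m + 2) →ₗ[F] V (m + 2)) ∘ₗ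
        replicatedDp q t V T dm dp dps (m + 1) =
      q • (replicatedDp q t V T dm dp dps (m + 1) ∘ₗ
        (commDD V dm (replicatedDp q t V T dm dp dps) m : V (m + 1) →ₗ[F] V (m + 1))) := by
  ext x
  simp only [LinearMap.comp_apply, LinearMap.smul_apply, commDD_replicatedDp_apply h.2.1 hq,
    replicatedDp_apply, map_smul]
  rw [h.commDD_zOp_one_apply hq, T_zOp_one_zOp_two_apply, h.1.T_commDD_dp_apply, map_smul,
    map_smul, h.2.2.dp_zOp_apply m 1 le_rfl (by omega), h.zOp_one_zOp_two_dp_apply hq]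
  module

theorem replicatedDp_zOp (h : CorrectlyIntertwined q t V T dm dp dps) (hq : q ≠ 0) (m i : ℕ)
    (h1 : 1 ≤ i) (h2 : i ≤ m + 1) :
    replicatedDp q t V T dm dp dps (m + 1) ∘ₗ (zOp q V T dm dps m i : V (m + 1) →ₗ[F] V (m + 1)) =
      (zOp q V T dm dps (m + 1) (i + 1) : V (m + 2) →ₗ[F] V (m + 2)) ∘ₗ
        replicatedDp q t V T dm dp dps (m + 1) := by
  obtain ⟨j, rfl⟩ : ∃ j, i = j + 1 := ⟨i - 1, by omega⟩
  ext x
  simp only [LinearMap.comp_apply, replicatedDp_apply, map_smul]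
  rw [h.2.2.dp_zOp_apply m (j + 1) h1 h2, h.zOp_one_zOp_dp_apply hq m j (by omega)]

theorem dps_yOp_replicatedDp_apply (h : CorrectlyIntertwined q t V T dm dp dps) (hq : q ≠ 0)
    (m : ℕ) : ∀ i, 1 ≤ i → i ≤ m + 1 → ∀ x : V (m + 1),
      dps (m + 1) (yOp q V T dm (replicatedDp q t V T dm dp dps) m i x) =
        yOp q V T dm (replicatedDp q t V T dm dp dps) (m + 1) (i + 1) (dps (m + 1) x)
  | 1, _, _, x => by
    rw [yOp.eq_3]
    simp only [zero_add, LinearMap.smul_apply, Module.End.mul_apply,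
      yOp_one_replicatedDp_apply h.2.1 hq, map_smul]
    rw [dps_zOp_one_apply h.2.1 hq, h.2.2.dps_yOp_apply m 1 le_rfl (by omega),
      h.1.T_yOp_two_apply hq, map_smul, map_smul, smul_comm]
  | i + 2, _, hi, x => by
    have hdps : ∀ v, dps (m + 1) (heckeInv q (T (m + 1) (i + 1)) v) =
        heckeInv q (T (m + 2) (i + 2)) (dps (m + 1) v) :=
      h.2.1.dp_T_apply m (i + 1) (by omega) (by omega)
    rw [yOp.eq_3, yOp.eq_3]
    simp only [LinearMap.smul_apply, Module.End.mul_apply, map_smul]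
    rw [hdps, h.dps_yOp_replicatedDp_apply hq m (i + 1) (by omega) (by omega), hdps]

theorem zOp_one_replicatedDp (h : CorrectlyIntertwined q t V T dm dp dps) (hq : q ≠ 0)
    (m : ℕ) :
    (zOp q V T dm dps m 1 : V (m + 1) →ₗ[F] V (m + 1)) ∘ₗ replicatedDp q t V T dm dp dps m =
      (-(t * q ^ (m + 1))) • ((yOp q V T dm (replicatedDp q t V T dm dp dps) m 1 :
        V (m + 1) →ₗ[F] V (m + 1)) ∘ₗ dps m) := by
  ext x
  simp only [LinearMap.comp_apply, LinearMap.smul_apply, replicatedDp_apply,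
    yOp_one_replicatedDp_apply h.2.1 hq, map_smul]
  rw [h.2.2.zOp_one_dp_apply, map_smul, smul_comm]

theorem aqRel_replicatedDp (h : CorrectlyIntertwined q t V T dm dp dps) (hq : q ≠ 0) :
    AqRel q V T dm (replicatedDp q t V T dm dp dps) :=
  ⟨h.1.1, h.1.2.1, h.1.2.2.1, h.1.2.2.2.1, h.1.2.2.2.2.1, h.T_replicatedDp_replicatedDp hq,
    replicatedDp_T h.1 h.2.1 hq, dm_commDD_replicatedDp_T h.1 h.2.1 hq,
    h.T_commDD_replicatedDp_replicatedDp hq⟩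

theorem intertwineRel_replicatedDp (h : CorrectlyIntertwined q t V T dm dp dps) (hq : q ≠ 0) :
    IntertwineRel q t V T dm (replicatedDp q t V T dm dp dps) dps :=
  ⟨h.replicatedDp_zOp hq,
    fun m i h1 h2 => LinearMap.ext (h.dps_yOp_replicatedDp_apply hq m i h1 h2),
    h.zOp_one_replicatedDp hq⟩

end CorrectlyIntertwined

theorem qv_ne_zero : qv ≠ 0 := by
  rw [qv, Ne, IsFractionRing.to_map_eq_zero_iff]
  exact MvPolynomial.X_ne_zero 0

/-- Replication: given correctly intertwined actions of `𝔸_q` and `𝔸_{q⁻¹}` over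
`ℚ(q,t)`, the operator `D₊ := −(qt)⁻¹ z_1 d₊ : V_k → V_{k+1}` together with `T_i`, `d₋`
again satisfies the defining relations of an action of `𝔸_q`, and the pair
`(T, d₋, D₊)`, `(T⁻¹, d₋, d₊*)` is again correctly intertwined. -/
theorem replication_rho_one (V : ℕ → Type*) [∀ k, AddCommGroup (V k)]
    [∀ k, Module Fqt (V k)] (T : ∀ k, ℕ → Module.End Fqt (V k))
    (dm : ∀ k, V (k + 1) →ₗ[Fqt] V k) (dp dps : ∀ k, V k →ₗ[Fqt] V (k + 1))
    (h : CorrectlyIntertwined qv tv V T dm dp dps) :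
    AqRel qv V T dm
      (fun k => (-(qv * tv)⁻¹) •
        ((zOp qv V T dm dps k 1 : V (k + 1) →ₗ[Fqt] V (k + 1)) ∘ₗ dp k)) ∧
    IntertwineRel qv tv V T dm
      (fun k => (-(qv * tv)⁻¹) •
        ((zOp qv V T dm dps k 1 : V (k + 1) →ₗ[Fqt] V (k + 1)) ∘ₗ dp k)) dps :=
  ⟨h.aqRel_replicatedDp qv_ne_zero, h.intertwineRel_replicatedDp qv_ne_zero⟩
end
end

section
/- For k ≥ 1 set ỹ_1 := T_{1↗k} · y_k · T*_{k↘1} as an operator on V_k, where T_{1↗k} = T_1 T_2 ⋯ T_{k−1} and T*_{k↘1} = T_{k−1}^{-1} ⋯ T_1^{-1}. Then z_1 · ỹ_1 = t · y_1 · z_1 + t·q^k · d_− · y_1 · d_+* · T*_{k↘1} as operators on V_k (on the right-hand side T*_{k↘1} acts on V_k, then d_+* : V_k → V_{k+1}, then y_1 acts on V_{k+1}, then d_− : V_{k+1} → V_k). -/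
/-!
The Hecke factors of `y_k` cancel against `T_{1↗k}` and `T*_{k↘1}`, so that
`ỹ_1 = (q - 1)⁻¹ (d₊d₋ - d₋d₊) T*_{k↘1}`. Now push `z_1` through `d₊d₋ - d₋d₊`: at `d₊` it becomes
`-t q^k y_1 d₊*`, and it commutes with `d₋` because `z_1` is the `y_1` of the `𝔸_{q⁻¹}`-action and
every `y_1` commutes with `d₋` by the relation `d₋(d₊d₋ - d₋d₊)T_{k-1} = q(d₊d₋ - d₋d₊)d₋`.
Commuting `y_1` back past `d₋` and regrouping gives `t y_1 z_1` plus the correction term.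
-/

noncomputable section

open LinearMap

theorem mul_heckeInv {F M : Type*} [Field F] [AddCommGroup M] [Module F M] {q : F}
    (hq : q ≠ 0) {S : Module.End F M} (hS : (S - 1) * (S + q • 1) = 0) :
    S * heckeInv q S = 1 := by
  have hquad : S * S + (q - 1) • S = q • 1 := by
    rw [sub_mul, one_mul, mul_add, mul_smul_comm, mul_one, sub_eq_zero] at hS
    rw [sub_smul, one_smul, add_sub, hS, add_sub_cancel_left]
  rw [heckeInv, mul_smul_comm, mul_add, mul_smul_comm, mul_one, hquad, smul_smul,
    inv_mul_cancel₀ hq, one_smul]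

section Monoid

variable {M : Type*} [Monoid M] {A B : ℕ → M}

theorem TupFrom1_mul_TdownTo1 :
    ∀ {j : ℕ}, (∀ i, 1 ≤ i → i < j → A i * B i = 1) → TupFrom1 A j * TdownTo1 B j = 1
  | 0, _ | 1, _ => mul_one 1
  | j + 2, h => by
    rw [TupFrom1, TdownTo1, mul_assoc, ← mul_assoc (A _), h (j + 1) (by omega) (by omega),
      one_mul, TupFrom1_mul_TdownTo1 fun i hi hij => h i hi (by omega)]

theorem TdownTo1_mul_TupFrom1 :
    ∀ {j : ℕ}, (∀ i, 1 ≤ i → i < j → B i * A i = 1) → TdownTo1 B j * TupFrom1 A j = 1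
  | 0, _ | 1, _ => mul_one 1
  | j + 2, h => by
    rw [TupFrom1, TdownTo1, mul_assoc, ← mul_assoc (TdownTo1 B _),
      TdownTo1_mul_TupFrom1 fun i hi hij => h i hi (by omega), one_mul,
      h (j + 1) (by omega) (by omega)]

end Monoid

theorem TdownTo1_comp {R M N : Type*} [CommRing R] [AddCommGroup M] [Module R M]
    [AddCommGroup N] [Module R N] {S : ℕ → Module.End R M} {S' : ℕ → Module.End R N}
    {f : M →ₗ[R] N} :
    ∀ {j : ℕ}, (∀ i, 1 ≤ i → i < j → (S' i : N →ₗ[R] N) ∘ₗ f = f ∘ₗ (S i : M →ₗ[R] M)) →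
      (TdownTo1 S' j : N →ₗ[R] N) ∘ₗ f = f ∘ₗ (TdownTo1 S j : M →ₗ[R] M)
  | 0, _ | 1, _ => rfl
  | j + 2, h => by
    rw [TdownTo1, TdownTo1, Module.End.mul_eq_comp, Module.End.mul_eq_comp, comp_assoc,
      TdownTo1_comp fun i hi hij => h i hi (by omega), ← comp_assoc,
      h (j + 1) (by omega) (by omega), comp_assoc]

section Dyck

variable {F : Type*} [Field F] {q t : F} {V : ℕ → Type*} [∀ k, AddCommGroup (V k)]
    [∀ k, Module F (V k)] {T : ∀ k, ℕ → Module.End F (V k)}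
    {dm : ∀ k, V (k + 1) →ₗ[F] V k} {dp dps : ∀ k, V k →ₗ[F] V (k + 1)}

theorem yOp_succ (m : ℕ) :
    ∀ j, yOp q V T dm dp m (j + 1) =
      q ^ j • (TdownTo1 (fun i => heckeInv q (T (m + 1) i)) (j + 1) *
        yOp q V T dm dp m 1 * TupFrom1 (fun i => heckeInv q (T (m + 1) i)) (j + 1))
  | 0 => by simp [TdownTo1, TupFrom1]
  | j + 1 => by
    rw [yOp.eq_3, yOp_succ m j]
    simp only [TdownTo1, TupFrom1, pow_succ', mul_smul_comm, smul_mul_assoc, smul_smul,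
      mul_assoc]

theorem TupFrom1_mul_yOp_mul_TdownTo1 (hq : q ≠ 0) (hA : AqRel q V T dm dp) (m : ℕ) :
    TupFrom1 (T (m + 1)) (m + 1) * yOp q V T dm dp m (m + 1) *
        TdownTo1 (fun i => heckeInv q (T (m + 1) i)) (m + 1) =
      (q - 1)⁻¹ • (commDD V dm dp m * TdownTo1 (fun i => heckeInv q (T (m + 1) i)) (m + 1)) := by
  have hinv : ∀ i, 1 ≤ i → i < m + 1 → T (m + 1) i * heckeInv q (T (m + 1) i) = 1 :=
    fun i hi hik => mul_heckeInv hq (hA.1 (m + 1) i hi hik)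
  rw [yOp_succ, yOp]
  simp only [smul_mul_assoc, mul_smul_comm, smul_smul, ← mul_assoc]
  rw [TupFrom1_mul_TdownTo1 hinv, one_mul, mul_assoc _ (TdownTo1 (T (m + 1)) (m + 1)),
    TdownTo1_mul_TupFrom1 hinv, mul_one]
  congr 1
  rcases eq_or_ne q 1 with rfl | hq1
  · simp
  · field_simp [sub_ne_zero.mpr hq1]

theorem dm_comp_yOp_one (hq : q ≠ 0) (hA : AqRel q V T dm dp) (m : ℕ) :
    dm (m + 1) ∘ₗ (yOp q V T dm dp (m + 1) 1 : V (m + 2) →ₗ[F] V (m + 2)) =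
      (yOp q V T dm dp m 1 : V (m + 1) →ₗ[F] V (m + 1)) ∘ₗ dm (m + 1) := by
  obtain ⟨-, -, -, -, hTdm, -, -, hcomm, -⟩ := hA
  have hdown := TdownTo1_comp (j := m + 1) (f := dm (m + 1)) (S := T (m + 2))
    (S' := T (m + 1)) fun i hi him => hTdm m i hi (by omega)
  simp only [yOp, comp_smul, smul_comp, Module.End.mul_eq_comp, TdownTo1]
  calc _ = (q ^ (m + 1) * (q - 1))⁻¹ • ((dm (m + 1) ∘ₗ commDD V dm dp (m + 1) ∘ₗ
        T (m + 2) (m + 1)) ∘ₗ TdownTo1 (T (m + 2)) (m + 1)) := rfl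
    _ = _ := by
      rw [hcomm, smul_comp, comp_assoc, ← hdown, smul_smul, ← comp_assoc]
      congr 1
      field_simp
      ring

theorem zOp_one_eq_yOp_one (hq : q ≠ 0) (m : ℕ) :
    zOp q V T dm dps m 1 = yOp q⁻¹ V (fun k i => heckeInv q (T k i)) dm dps m 1 := by
  rw [zOp, yOp]
  congr 1
  rcases eq_or_ne q 1 with rfl | hq1
  · simp
  · field_simp [sub_ne_zero.mpr hq1]
    rw [one_div_pow, ← div_eq_mul_one_div, pow_succ, mul_div_cancel_left₀ _ (pow_ne_zero _ hq)]

theorem zOp_one_mul_ytilde_one (hq : q ≠ 0) (hq1 : q ≠ 1)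
    (h : CorrectlyIntertwined q t V T dm dp dps) (m : ℕ) :
    zOp q V T dm dps m 1 *
        (TupFrom1 (T (m + 1)) (m + 1) * yOp q V T dm dp m (m + 1) *
          TdownTo1 (fun i => heckeInv q (T (m + 1) i)) (m + 1)) =
      t • (yOp q V T dm dp m 1 * zOp q V T dm dps m 1) +
        (t * q ^ (m + 1)) •
          (dm (m + 1) ∘ₗ (yOp q V T dm dp (m + 1) 1 : V (m + 2) →ₗ[F] V (m + 2)) ∘ₗ
            dps (m + 1) ∘ₗ
            (TdownTo1 (fun i => heckeInv q (T (m + 1) i)) (m + 1) :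
              V (m + 1) →ₗ[F] V (m + 1))) := by
  obtain ⟨hA, hA', -, -, hzdp_comp⟩ := h
  have hzdm : ∀ u, zOp q V T dm dps m 1 (dm (m + 1) u) =
      dm (m + 1) (zOp q V T dm dps (m + 1) 1 u) := by
    have h := dm_comp_yOp_one (inv_ne_zero hq) hA' m
    rw [← zOp_one_eq_yOp_one hq, ← zOp_one_eq_yOp_one hq] at h
    exact fun u => (LinearMap.congr_fun h u).symm
  have hydm : ∀ u, yOp q V T dm dp m 1 (dm (m + 1) u) =
      dm (m + 1) (yOp q V T dm dp (m + 1) 1 u) :=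
    fun u => (LinearMap.congr_fun (dm_comp_yOp_one hq hA m) u).symm
  have hzdp : ∀ k u, zOp q V T dm dps k 1 (dp k u) =
      -(t * q ^ (k + 1)) • yOp q V T dm dp k 1 (dps k u) :=
    fun k u => LinearMap.congr_fun (hzdp_comp k) u
  rw [TupFrom1_mul_yOp_mul_TdownTo1 hq hA]
  ext x
  simp only [Module.End.mul_apply, LinearMap.smul_apply, LinearMap.add_apply, comp_apply]
  set u := TdownTo1 (fun i => heckeInv q (T (m + 1) i)) (m + 1) x
  -- unfold `z_1` only in `y_1 z_1`; the other `z_1` is pushed through `d₊d₋ - d₋d₊`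
  rw [show zOp q V T dm dps m 1 x = (q ^ (m + 1) / (1 - q)) • commDD V dm dps m u from rfl]
  simp only [commDD, LinearMap.sub_apply, comp_apply, map_sub, map_smul, hzdp, hzdm, hydm]
  have hq1' : q - 1 ≠ 0 := sub_ne_zero.mpr hq1
  have h1q : 1 - q ≠ 0 := sub_ne_zero.mpr hq1.symm
  match_scalars <;> field_simp <;> ring

end Dyck

theorem qv_ne_one : qv ≠ 1 := by
  rw [qv, ← map_one (algebraMap (MvPolynomial (Fin 2) ℚ) Fqt), Ne,
    (IsFractionRing.injective (MvPolynomial (Fin 2) ℚ) Fqt).eq_iff]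
  intro h
  simpa using congrArg (MvPolynomial.eval 0) h

/-- With `ỹ_1 := T_{1↗k} y_k T*_{k↘1}` on `V_k` (`k = m+1`), one has
`z_1 ỹ_1 = t y_1 z_1 + t q^k d₋ y_1 d₊* T*_{k↘1}` as operators on `V_k`. -/
theorem z_one_ytilde_one (V : ℕ → Type*) [∀ k, AddCommGroup (V k)]
    [∀ k, Module Fqt (V k)] (T : ∀ k, ℕ → Module.End Fqt (V k))
    (dm : ∀ k, V (k + 1) →ₗ[Fqt] V k) (dp dps : ∀ k, V k →ₗ[Fqt] V (k + 1))
    (h : CorrectlyIntertwined qv tv V T dm dp dps) :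
    ∀ m, zOp qv V T dm dps m 1 *
        (TupFrom1 (T (m + 1)) (m + 1) * yOp qv V T dm dp m (m + 1) *
          TdownTo1 (fun i => heckeInv qv (T (m + 1) i)) (m + 1)) =
      tv • (yOp qv V T dm dp m 1 * zOp qv V T dm dps m 1) +
        (tv * qv ^ (m + 1)) •
          (dm (m + 1) ∘ₗ (yOp qv V T dm dp (m + 1) 1 : V (m + 2) →ₗ[Fqt] V (m + 2)) ∘ₗ
            dps (m + 1) ∘ₗ
            (TdownTo1 (fun i => heckeInv qv (T (m + 1) i)) (m + 1) :
              V (m + 1) →ₗ[Fqt] V (m + 1))) :=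
  zOp_one_mul_ytilde_one qv_ne_zero qv_ne_one h
end
end

section
/- Collision rule for trains: for all indices 1 ≤ a, b, c, d ≤ k with b ≠ c one has T_{a↗b} · T_{c↘d} = T_{c′↘d′} · T_{a′↗b′} in G, where b′ = σ_{d,c}(b), c′ = σ_{a,b}(c), a′ = σ_{d,c′}(a), and d′ = σ_{a′,b′}(d). -/
noncomputable section

variable {G : Type*} [Group G]

/-- `ascProd T a n = T_a * T_{a+1} * ⋯ * T_{a+n-1}` (`n` factors, ascending). -/
def ascProd (T : ℕ → G) (a : ℕ) : ℕ → G
  | 0 => 1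
  | n + 1 => ascProd T a n * T (a + n)

/-- `descProd T b n = T_{b+n-1} * ⋯ * T_b` (`n` factors, descending). -/
def descProd (T : ℕ → G) (b : ℕ) : ℕ → G
  | 0 => 1
  | n + 1 => T (b + n) * descProd T b n

/-- The ascending train `T_{a↗b}`: for `a ≤ b` it is `T_a T_{a+1} ⋯ T_{b-1}`;
for `a > b` it is, by convention, `T*_{a↘b} = T_{a-1}⁻¹ ⋯ T_b⁻¹`. -/
def up (T : ℕ → G) (a b : ℕ) : G :=
  if a ≤ b then ascProd T a (b - a) else (ascProd T b (a - b))⁻¹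

/-- The descending train `T_{a↘b}`: for `a ≥ b` it is `T_{a-1} T_{a-2} ⋯ T_b`;
for `a < b` it is, by convention, `T*_{a↗b} = T_a⁻¹ ⋯ T_{b-1}⁻¹`. -/
def down (T : ℕ → G) (a b : ℕ) : G :=
  if b ≤ a then descProd T b (a - b) else (descProd T a (b - a))⁻¹

/-- The starred ascending train `T*_{a↗b} = T_a⁻¹ ⋯ T_{b-1}⁻¹` (for `a ≤ b`),
with the analogous convention for `a > b`. -/
def upStar (T : ℕ → G) (a b : ℕ) : G := up (fun n => (T n)⁻¹) a b

/-- The starred descending train `T*_{a↘b} = T_{a-1}⁻¹ ⋯ T_b⁻¹` (for `a ≥ b`),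
with the analogous convention for `a < b`. -/
def downStar (T : ℕ → G) (a b : ℕ) : G := down (fun n => (T n)⁻¹) a b

/-- `σ_{a,b}(c) = c+1` if `a ≤ c < b`, `c−1` if `a ≥ c > b`, and `c` otherwise. -/
def sigmaShift (a b c : ℕ) : ℕ :=
  if a ≤ c ∧ c < b then c + 1 else if b < c ∧ c ≤ a then c - 1 else c

section TrainCollisionAux
namespace TrainAux

lemma ascProd_succ (T : ℕ → G) (a n : ℕ) :
    ascProd T a (n+1) = ascProd T a n * T (a + n) := rfl

lemma descProd_succ (T : ℕ → G) (b n : ℕ) :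
    descProd T b (n+1) = T (b + n) * descProd T b n := rfl

lemma ascProd_add (T : ℕ → G) (a m n : ℕ) :
    ascProd T a (m + n) = ascProd T a m * ascProd T (a + m) n := by
  induction n with
  | zero => simp [ascProd]
  | succ n ih =>
    have h : m + (n + 1) = (m + n) + 1 := rfl
    rw [h, ascProd_succ, ih, ascProd_succ, mul_assoc, Nat.add_assoc]

lemma descProd_add (T : ℕ → G) (c q p : ℕ) :
    descProd T c (q + p) = descProd T (c + q) p * descProd T c q := by
  induction p with
  | zero => simp [descProd]
  | succ p ih =>
    have h : q + (p + 1) = (q + p) + 1 := rfl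
    rw [h, descProd_succ, ih, descProd_succ, mul_assoc, Nat.add_assoc]

lemma descProd_split_bottom (T : ℕ → G) (d n : ℕ) :
    descProd T d (n + 1) = descProd T (d + 1) n * T d := by
  have := descProd_add T d 1 n
  simpa [descProd, Nat.add_comm 1 n] using this

lemma comm_descProd (T : ℕ → G) {j d n : ℕ}
    (h : ∀ ℓ, d ≤ ℓ → ℓ < d + n → T j * T ℓ = T ℓ * T j) :
    T j * descProd T d n = descProd T d n * T j := by
  induction n with
  | zero => simp [descProd]
  | succ n ih =>
    rw [descProd_succ, ← mul_assoc, h (d+n) (by omega) (by omega), mul_assoc,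
      ih (fun ℓ h1 h2 => h ℓ h1 (by omega)), mul_assoc]

lemma up_refl (T : ℕ → G) (a : ℕ) : up T a a = 1 := by
  simp [up, ascProd]

lemma down_refl (T : ℕ → G) (a : ℕ) : down T a a = 1 := by
  simp [down, descProd]

lemma up_succ (T : ℕ → G) (i : ℕ) : up T i (i+1) = T i := by
  have h : i + 1 - i = 1 := by omega
  simp [up, h, ascProd]

lemma up_pred (T : ℕ → G) (i : ℕ) : up T (i+1) i = (T i)⁻¹ := by
  have h : i + 1 - i = 1 := by omega
  have h2 : ¬ (i + 1 ≤ i) := by omega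
  simp [up, h, h2, ascProd]

lemma up_two (T : ℕ → G) (i : ℕ) : up T i (i+2) = T i * T (i+1) := by
  have h : i + 2 - i = 2 := by omega
  simp [up, h, ascProd]

lemma up_two_inv (T : ℕ → G) (i : ℕ) : up T (i+2) i = (T i * T (i+1))⁻¹ := by
  have h : i + 2 - i = 2 := by omega
  have h2 : ¬ (i + 2 ≤ i) := by omega
  simp [up, h, h2, ascProd]

lemma down_succ (T : ℕ → G) (i : ℕ) : down T (i+1) i = T i := by
  have h : i + 1 - i = 1 := by omega
  simp [down, h, descProd]

lemma down_succ_inv (T : ℕ → G) (i : ℕ) : down T i (i+1) = (T i)⁻¹ := by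
  have h : i + 1 - i = 1 := by omega
  have h2 : ¬ (i + 1 ≤ i) := by omega
  simp [down, h, h2, descProd]

lemma down_eq_desc (T : ℕ → G) {c d : ℕ} (h : d ≤ c) :
    down T c d = descProd T d (c - d) := by
  rw [down, if_pos h]

lemma down_eq_desc_inv (T : ℕ → G) {c e : ℕ} (h : c ≤ e) :
    down T c e = (descProd T c (e - c))⁻¹ := by
  rcases eq_or_lt_of_le h with rfl | h'
  · simp [down, descProd]
  · rw [down, if_neg (by omega)]

lemma down_trans (T : ℕ → G) (a b c : ℕ) :
    down T a b * down T b c = down T a c := by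
  rcases le_or_gt b a with h1 | h1
  · rcases le_or_gt c b with h2 | h2
    · rw [down_eq_desc T h1, down_eq_desc T h2, down_eq_desc T (le_trans h2 h1)]
      have := descProd_add T c (b - c) (a - b)
      rw [show (b - c) + (a - b) = a - c by omega, show c + (b - c) = b by omega] at this
      rw [this]
    · rcases le_or_gt c a with h3 | h3
      · rw [down_eq_desc T h1, down_eq_desc_inv T (le_of_lt h2), down_eq_desc T h3]
        have := descProd_add T b (c - b) (a - c)
        rw [show (c - b) + (a - c) = a - b by omega, show b + (c - b) = c by omega] at this
        rw [this]; group
      · rw [down_eq_desc T h1, down_eq_desc_inv T (le_of_lt h2), down_eq_desc_inv T (le_of_lt h3)]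
        have := descProd_add T b (a - b) (c - a)
        rw [show (a - b) + (c - a) = c - b by omega, show b + (a - b) = a by omega] at this
        rw [this]; group
  · rcases le_or_gt c b with h2 | h2
    · rcases le_or_gt c a with h3 | h3
      · rw [down_eq_desc_inv T (le_of_lt h1), down_eq_desc T h2, down_eq_desc T h3]
        have := descProd_add T c (a - c) (b - a)
        rw [show (a - c) + (b - a) = b - c by omega, show c + (a - c) = a by omega] at this
        rw [this]; group
      · rw [down_eq_desc_inv T (le_of_lt h1), down_eq_desc T h2, down_eq_desc_inv T (le_of_lt h3)]
        have := descProd_add T a (c - a) (b - c)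
        rw [show (c - a) + (b - c) = b - a by omega, show a + (c - a) = c by omega] at this
        rw [this]; group
    · rw [down_eq_desc_inv T (le_of_lt h1), down_eq_desc_inv T (le_of_lt h2),
        down_eq_desc_inv T (le_of_lt (lt_trans h1 h2))]
      have := descProd_add T a (b - a) (c - b)
      rw [show (b - a) + (c - b) = c - a by omega, show a + (b - a) = b by omega] at this
      rw [this, mul_inv_rev]

lemma up_eq_asc (T : ℕ → G) {a b : ℕ} (h : a ≤ b) :
    up T a b = ascProd T a (b - a) := by rw [up, if_pos h]

lemma up_eq_asc_inv (T : ℕ → G) {a b : ℕ} (h : b ≤ a) :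
    up T a b = (ascProd T b (a - b))⁻¹ := by
  rcases eq_or_lt_of_le h with rfl | h'
  · simp [up, ascProd]
  · rw [up, if_neg (by omega)]

lemma up_trans (T : ℕ → G) (a b c : ℕ) :
    up T a b * up T b c = up T a c := by
  rcases le_or_gt a b with h1 | h1
  · rcases le_or_gt b c with h2 | h2
    · rw [up_eq_asc T h1, up_eq_asc T h2, up_eq_asc T (le_trans h1 h2)]
      have := ascProd_add T a (b - a) (c - b)
      rw [show (b - a) + (c - b) = c - a by omega, show a + (b - a) = b by omega] at this
      rw [this]
    · rcases le_or_gt a c with h3 | h3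
      · rw [up_eq_asc T h1, up_eq_asc_inv T (le_of_lt h2), up_eq_asc T h3]
        have := ascProd_add T a (c - a) (b - c)
        rw [show (c - a) + (b - c) = b - a by omega, show a + (c - a) = c by omega] at this
        rw [this]; group
      · rw [up_eq_asc T h1, up_eq_asc_inv T (le_of_lt h2), up_eq_asc_inv T (le_of_lt h3)]
        have := ascProd_add T c (a - c) (b - a)
        rw [show (a - c) + (b - a) = b - c by omega, show c + (a - c) = a by omega] at this
        rw [this]; group
  · rcases le_or_gt b c with h2 | h2
    · rcases le_or_gt a c with h3 | h3
      · rw [up_eq_asc_inv T (le_of_lt h1), up_eq_asc T h2, up_eq_asc T h3]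
        have := ascProd_add T b (a - b) (c - a)
        rw [show (a - b) + (c - a) = c - b by omega, show b + (a - b) = a by omega] at this
        rw [this]; group
      · rw [up_eq_asc_inv T (le_of_lt h1), up_eq_asc T h2, up_eq_asc_inv T (le_of_lt h3)]
        have := ascProd_add T b (c - b) (a - c)
        rw [show (c - b) + (a - c) = a - b by omega, show b + (c - b) = c by omega] at this
        rw [this]; group
    · rw [up_eq_asc_inv T (le_of_lt h1), up_eq_asc_inv T (le_of_lt h2),
        up_eq_asc_inv T (le_of_lt (lt_trans h2 h1))]
      have := ascProd_add T c (b - c) (a - b)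
      rw [show (b - c) + (a - b) = a - c by omega, show c + (b - c) = b by omega] at this
      rw [this, mul_inv_rev]

end TrainAux

namespace TrainAux
variable {G : Type*} [Group G]

lemma conj_inv {X x y : G} (h : x * X = X * y) : x⁻¹ * X = X * y⁻¹ := by
  rw [inv_mul_eq_iff_eq_mul, ← mul_assoc, h, mul_assoc, mul_inv_cancel, mul_one]

lemma conj_swap {X x y : G} (h : x * X = X * y) : y * X⁻¹ = X⁻¹ * x := by
  rw [mul_inv_eq_iff_eq_mul, mul_assoc, h, ← mul_assoc, inv_mul_cancel, one_mul]

lemma conj_swap_inv {X x y : G} (h : x * X = X * y) : y⁻¹ * X⁻¹ = X⁻¹ * x⁻¹ :=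
  conj_inv (conj_swap h)

lemma braid_aux1 {x y : G} (h : x * y * x = y * x * y) :
    x⁻¹ * y = y * x * (x * y)⁻¹ := by
  apply mul_left_cancel (a := x)
  apply mul_right_cancel (b := x * y)
  calc x * (x⁻¹ * y) * (x * y) = y * x * y := by group
  _ = x * y * x := h.symm
  _ = x * (y * x * (x * y)⁻¹) * (x * y) := by group

lemma sigma_same (x y : ℕ) : sigmaShift x x y = y := by
  simp only [sigmaShift]
  split_ifs <;> omega

lemma sigma_ge_one {u v x : ℕ} (h1 : 1 ≤ x) (h2 : 1 ≤ v) : 1 ≤ sigmaShift u v x := by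
  simp only [sigmaShift]; split_ifs <;> omega

lemma sigma_le_k {k u v x : ℕ} (h1 : x ≤ k) (h2 : v ≤ k) : sigmaShift u v x ≤ k := by
  simp only [sigmaShift]; split_ifs <;> omega

section
variable (k : ℕ) (T : ℕ → G)
  (hbraid : ∀ i, 1 ≤ i → i + 2 ≤ k →
      T i * T (i + 1) * T i = T (i + 1) * T i * T (i + 1))
  (hcomm : ∀ i j, 1 ≤ i → i + 1 ≤ k → 1 ≤ j → j + 1 ≤ k →
      (i + 1 < j ∨ j + 1 < i) → T i * T j = T j * T i)

include hbraid hcomm in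
lemma pass_desc : ∀ n d i, 1 ≤ d → d + n ≤ k → d ≤ i → i + 2 ≤ d + n →
    T i * descProd T d n = descProd T d n * T (i + 1) := by
  intro n
  induction n with
  | zero => intro d i h1 h2 h3 h4; omega
  | succ m ih =>
    intro d i h1 h2 h3 h4
    rcases le_or_gt (i + 2) (d + m) with h5 | h5
    · rw [descProd_succ, ← mul_assoc,
        hcomm i (d + m) (by omega) (by omega) (by omega) (by omega) (Or.inl (by omega)),
        mul_assoc, ih d i h1 (by omega) h3 h5, ← mul_assoc]
    · have hi : i = d + m - 1 := by omega
      obtain ⟨m', rfl⟩ : ∃ m', m = m' + 1 := ⟨m - 1, by omega⟩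
      have hi' : i = d + m' := by omega
      subst hi'
      rw [descProd_succ, descProd_succ, ← mul_assoc, ← mul_assoc,
        show d + (m' + 1) = d + m' + 1 from rfl,
        hbraid (d + m') (by omega) (by omega)]
      have hc : T (d + m' + 1) * descProd T d m' = descProd T d m' * T (d + m' + 1) :=
        comm_descProd T (fun ℓ hl1 hl2 =>
          (hcomm (d + m' + 1) ℓ (by omega) (by omega) (by omega) (by omega)
            (Or.inr (by omega))))
      rw [mul_assoc (T (d + m' + 1) * T (d + m')), hc, ← mul_assoc, ← mul_assoc, mul_assoc]

include hcomm in
lemma comm_descProd_far {j d n : ℕ} (h1 : 1 ≤ j) (h2 : j + 1 ≤ k) (h3 : 1 ≤ d)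
    (h4 : d + n ≤ k) (h5 : j + 2 ≤ d ∨ d + n + 1 ≤ j) :
    T j * descProd T d n = descProd T d n * T j := by
  refine comm_descProd T (fun ℓ hl1 hl2 => hcomm j ℓ h1 h2 (by omega) (by omega) (by omega))

include hbraid hcomm in
lemma end_desc (c m : ℕ) (h1 : 1 ≤ c) (hk : c + m + 2 ≤ k) :
    T (c + m + 1) * descProd T c (m + 1) * T (c + m + 1) =
      T (c + m) * T (c + m + 1) * descProd T c (m + 1) := by
  have hc : T (c + m + 1) * descProd T c m = descProd T c m * T (c + m + 1) :=
    comm_descProd_far k T hcomm (by omega) (by omega) h1 (by omega) (Or.inr (by omega))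
  calc T (c+m+1) * descProd T c (m+1) * T (c+m+1)
      = T (c+m+1) * T (c+m) * (descProd T c m * T (c+m+1)) := by rw [descProd_succ]; group
    _ = T (c+m+1) * T (c+m) * (T (c+m+1) * descProd T c m) := by rw [← hc]
    _ = T (c+m+1) * T (c+m) * T (c+m+1) * descProd T c m := by group
    _ = T (c+m) * T (c+m+1) * T (c+m) * descProd T c m := by
        rw [← hbraid (c+m) (by omega) (by omega)]
    _ = T (c+m) * T (c+m+1) * descProd T c (m+1) := by rw [descProd_succ]; group

include hbraid hcomm in
lemma stepE (c m : ℕ) (h1 : 1 ≤ c) (hk : c + m + 2 ≤ k) :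
    T (c + m + 1) * (descProd T c (m + 1))⁻¹ =
      (descProd T c (m + 2))⁻¹ * (T (c + m) * T (c + m + 1)) := by
  have hE := end_desc k T hbraid hcomm c m h1 hk
  have h2 : T (c + m) * T (c + m + 1) =
      T (c + m + 1) * descProd T c (m + 1) * T (c + m + 1) * (descProd T c (m + 1))⁻¹ := by
    rw [hE]; group
  rw [h2, show descProd T c (m + 2) = T (c + m + 1) * descProd T c (m + 1) from rfl]
  group

end
end TrainAux

namespace TrainAux
variable {G : Type*} [Group G]

section
variable (k : ℕ) (T : ℕ → G)
  (hbraid : ∀ i, 1 ≤ i → i + 2 ≤ k →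
      T i * T (i + 1) * T i = T (i + 1) * T i * T (i + 1))
  (hcomm : ∀ i j, 1 ≤ i → i + 1 ≤ k → 1 ≤ j → j + 1 ≤ k →
      (i + 1 < j ∨ j + 1 < i) → T i * T j = T j * T i)

include hbraid hcomm in
lemma step_up (i c d : ℕ) (h1i : 1 ≤ i) (hik : i + 1 ≤ k) (h1c : 1 ≤ c) (hck : c ≤ k)
    (h1d : 1 ≤ d) (hdk : d ≤ k) (hbc : i + 1 ≠ c) :
    up T i (i+1) * down T c d =
      down T (sigmaShift i (i+1) c)
          (sigmaShift (sigmaShift d (sigmaShift i (i+1) c) i) (sigmaShift d c (i+1)) d) *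
        up T (sigmaShift d (sigmaShift i (i+1) c) i) (sigmaShift d c (i+1)) := by
  by_cases hci : c = i
  · subst hci
    rw [show sigmaShift c (c+1) c = c + 1 from by simp only [sigmaShift]; split_ifs <;> omega,
      show sigmaShift d (c+1) c = sigmaShift d c (c+1) from by
        simp only [sigmaShift]; split_ifs <;> omega,
      sigma_same, up_refl, mul_one, up_succ, ← down_succ T c, down_trans]
  · rw [show sigmaShift i (i+1) c = c from by simp only [sigmaShift]; split_ifs <;> omega]
    by_cases hcd : c = d
    · subst hcd
      rw [sigma_same c i, sigma_same c (i+1),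
        show sigmaShift i (i+1) c = c from by simp only [sigmaShift]; split_ifs <;> omega,
        down_refl, one_mul, mul_one]
    rcases lt_or_gt_of_ne (fun h => hcd h.symm) with hdc | hdc
    · -- d < c : descending run
      by_cases hb1 : i + 2 ≤ d
      · rw [show sigmaShift d c i = i from by simp only [sigmaShift]; split_ifs <;> omega,
          show sigmaShift d c (i+1) = i + 1 from by simp only [sigmaShift]; split_ifs <;> omega,
          show sigmaShift i (i+1) d = d from by simp only [sigmaShift]; split_ifs <;> omega,
          up_succ, down_eq_desc T (by omega : d ≤ c)]
        exact comm_descProd_far k T hcomm h1i hik (by omega) (by omega) (Or.inl (by omega))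
      by_cases hb2 : c + 1 ≤ i
      · rw [show sigmaShift d c i = i from by simp only [sigmaShift]; split_ifs <;> omega,
          show sigmaShift d c (i+1) = i + 1 from by simp only [sigmaShift]; split_ifs <;> omega,
          show sigmaShift i (i+1) d = d from by simp only [sigmaShift]; split_ifs <;> omega,
          up_succ, down_eq_desc T (by omega : d ≤ c)]
        exact comm_descProd_far k T hcomm h1i hik (by omega) (by omega) (Or.inr (by omega))
      by_cases hb3 : d ≤ i
      · -- d ≤ i ≤ c - 2
        rw [show sigmaShift d c i = i + 1 from by simp only [sigmaShift]; split_ifs <;> omega,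
          show sigmaShift d c (i+1) = (i+1) + 1 from by
            simp only [sigmaShift]; split_ifs <;> omega,
          show sigmaShift (i+1) ((i+1)+1) d = d from by
            simp only [sigmaShift]; split_ifs <;> omega,
          up_succ, up_succ, down_eq_desc T (by omega : d ≤ c)]
        exact pass_desc k T hbraid hcomm (c - d) d i (by omega) (by omega) hb3 (by omega)
      · -- d = i + 1
        obtain rfl : d = i + 1 := by omega
        rw [show sigmaShift (i+1) c i = i from by simp only [sigmaShift]; split_ifs <;> omega,
          show sigmaShift (i+1) c (i+1) = i + 2 from by
            simp only [sigmaShift]; split_ifs <;> omega,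
          show sigmaShift i (i+2) (i+1) = i + 2 from by
            simp only [sigmaShift]; split_ifs <;> omega,
          up_succ, up_two, down_eq_desc T (by omega : i + 1 ≤ c),
          down_eq_desc T (by omega : i + 2 ≤ c),
          show c - (i+1) = (c - (i+2)) + 1 from by omega, descProd_split_bottom]
        have hcm : T i * descProd T (i+2) (c - (i+2)) = descProd T (i+2) (c - (i+2)) * T i :=
          comm_descProd_far k T hcomm h1i hik (by omega) (by omega) (Or.inl (by omega))
        rw [← mul_assoc, hcm, mul_assoc]
    · -- c < d : starred run
      by_cases hg1 : i + 2 ≤ c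
      · rw [show sigmaShift d c i = i from by simp only [sigmaShift]; split_ifs <;> omega,
          show sigmaShift d c (i+1) = i + 1 from by simp only [sigmaShift]; split_ifs <;> omega,
          show sigmaShift i (i+1) d = d from by simp only [sigmaShift]; split_ifs <;> omega,
          up_succ, down_eq_desc_inv T (le_of_lt hdc)]
        exact conj_swap
          (comm_descProd_far k T hcomm h1i hik (by omega) (by omega) (Or.inl (by omega)))
      by_cases hg2 : d + 1 ≤ i
      · rw [show sigmaShift d c i = i from by simp only [sigmaShift]; split_ifs <;> omega,
          show sigmaShift d c (i+1) = i + 1 from by simp only [sigmaShift]; split_ifs <;> omega,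
          show sigmaShift i (i+1) d = d from by simp only [sigmaShift]; split_ifs <;> omega,
          up_succ, down_eq_desc_inv T (le_of_lt hdc)]
        exact conj_swap
          (comm_descProd_far k T hcomm h1i hik (by omega) (by omega) (Or.inr (by omega)))
      by_cases hg4 : i = d
      · subst hg4
        obtain ⟨m, hm⟩ : ∃ m, i = c + m + 1 := ⟨i - c - 1, by omega⟩
        subst hm
        rw [show sigmaShift (c+m+1) c (c+m+1) = c + m from by
            simp only [sigmaShift]; split_ifs <;> omega,
          show sigmaShift (c+m+1) c (c+m+1+1) = (c+m) + 2 from by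
            simp only [sigmaShift]; split_ifs <;> omega,
          show sigmaShift (c+m) ((c+m)+2) (c+m+1) = (c+m) + 2 from by
            simp only [sigmaShift]; split_ifs <;> omega,
          up_succ, up_two, down_eq_desc_inv T (by omega : c ≤ c + m + 1),
          down_eq_desc_inv T (by omega : c ≤ (c+m) + 2),
          show c + m + 1 - c = m + 1 from by omega,
          show (c+m) + 2 - c = m + 2 from by omega]
        exact stepE k T hbraid hcomm c m h1c (by omega)
      · -- c + 1 ≤ i ≤ d - 1
        obtain ⟨j, rfl⟩ : ∃ j, i = j + 1 := ⟨i - 1, by omega⟩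
        rw [show sigmaShift d c (j+1) = j from by simp only [sigmaShift]; split_ifs <;> omega,
          show sigmaShift d c (j+1+1) = j + 1 from by
            simp only [sigmaShift]; split_ifs <;> omega,
          show sigmaShift j (j+1) d = d from by simp only [sigmaShift]; split_ifs <;> omega,
          up_succ, up_succ, down_eq_desc_inv T (le_of_lt hdc)]
        exact conj_swap
          (pass_desc k T hbraid hcomm (d - c) c j (by omega) (by omega) (by omega) (by omega))

end
end TrainAux

namespace TrainAux
variable {G : Type*} [Group G]

section
variable (k : ℕ) (T : ℕ → G)
  (hbraid : ∀ i, 1 ≤ i → i + 2 ≤ k →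
      T i * T (i + 1) * T i = T (i + 1) * T i * T (i + 1))
  (hcomm : ∀ i j, 1 ≤ i → i + 1 ≤ k → 1 ≤ j → j + 1 ≤ k →
      (i + 1 < j ∨ j + 1 < i) → T i * T j = T j * T i)

include hbraid hcomm in
lemma step_down (i c d : ℕ) (h1i : 1 ≤ i) (hik : i + 1 ≤ k) (h1c : 1 ≤ c) (hck : c ≤ k)
    (h1d : 1 ≤ d) (hdk : d ≤ k) (hbc : i ≠ c) :
    up T (i+1) i * down T c d =
      down T (sigmaShift (i+1) i c)
          (sigmaShift (sigmaShift d (sigmaShift (i+1) i c) (i+1)) (sigmaShift d c i) d) *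
        up T (sigmaShift d (sigmaShift (i+1) i c) (i+1)) (sigmaShift d c i) := by
  by_cases hci : c = i + 1
  · subst hci
    rw [show sigmaShift (i+1) i (i+1) = i from by simp only [sigmaShift]; split_ifs <;> omega,
      show sigmaShift d i (i+1) = sigmaShift d (i+1) i from by
        simp only [sigmaShift]; split_ifs <;> omega,
      sigma_same, up_refl, mul_one, up_pred, ← down_succ_inv T i, down_trans]
  · rw [show sigmaShift (i+1) i c = c from by simp only [sigmaShift]; split_ifs <;> omega]
    by_cases hcd : c = d
    · subst hcd
      rw [sigma_same c (i+1), sigma_same c i,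
        show sigmaShift (i+1) i c = c from by simp only [sigmaShift]; split_ifs <;> omega,
        down_refl, one_mul, mul_one]
    rcases lt_or_gt_of_ne (fun h => hcd h.symm) with hdc | hdc
    · -- d < c : descending run
      by_cases hb1 : i + 2 ≤ d
      · rw [show sigmaShift d c (i+1) = i + 1 from by simp only [sigmaShift]; split_ifs <;> omega,
          show sigmaShift d c i = i from by simp only [sigmaShift]; split_ifs <;> omega,
          show sigmaShift (i+1) i d = d from by simp only [sigmaShift]; split_ifs <;> omega,
          up_pred, down_eq_desc T (by omega : d ≤ c)]
        exact conj_inv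
          (comm_descProd_far k T hcomm h1i hik (by omega) (by omega) (Or.inl (by omega)))
      by_cases hb2 : c + 1 ≤ i
      · rw [show sigmaShift d c (i+1) = i + 1 from by simp only [sigmaShift]; split_ifs <;> omega,
          show sigmaShift d c i = i from by simp only [sigmaShift]; split_ifs <;> omega,
          show sigmaShift (i+1) i d = d from by simp only [sigmaShift]; split_ifs <;> omega,
          up_pred, down_eq_desc T (by omega : d ≤ c)]
        exact conj_inv
          (comm_descProd_far k T hcomm h1i hik (by omega) (by omega) (Or.inr (by omega)))
      by_cases hb3 : d ≤ i
      · -- d ≤ i ≤ c - 2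
        rw [show sigmaShift d c (i+1) = (i+1) + 1 from by
            simp only [sigmaShift]; split_ifs <;> omega,
          show sigmaShift d c i = i + 1 from by simp only [sigmaShift]; split_ifs <;> omega,
          show sigmaShift ((i+1)+1) (i+1) d = d from by
            simp only [sigmaShift]; split_ifs <;> omega,
          up_pred, up_pred, down_eq_desc T (by omega : d ≤ c)]
        exact conj_inv (pass_desc k T hbraid hcomm (c - d) d i (by omega) (by omega) hb3 (by omega))
      · -- d = i + 1
        obtain rfl : d = i + 1 := by omega
        rw [show sigmaShift (i+1) c (i+1) = (i) + 2 from by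
            simp only [sigmaShift]; split_ifs <;> omega,
          show sigmaShift (i+1) c i = i from by simp only [sigmaShift]; split_ifs <;> omega,
          show sigmaShift (i+2) i (i+1) = i from by simp only [sigmaShift]; split_ifs <;> omega,
          up_pred, up_two_inv, down_eq_desc T (by omega : i + 1 ≤ c),
          down_eq_desc T (by omega : i ≤ c),
          show c - i = (c - (i+1)) + 1 from by omega, descProd_split_bottom,
          show c - (i+1) = (c - (i+2)) + 1 from by omega, descProd_split_bottom]
        have hcm : T i * descProd T (i+2) (c - (i+2)) = descProd T (i+2) (c - (i+2)) * T i :=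
          comm_descProd_far k T hcomm h1i hik (by omega) (by omega) (Or.inl (by omega))
        have hci' := conj_inv hcm
        rw [← mul_assoc, hci', mul_assoc, braid_aux1 (hbraid i h1i (by omega))]
        group
    · -- c < d : starred run
      by_cases hg1 : i + 2 ≤ c
      · rw [show sigmaShift d c (i+1) = i + 1 from by simp only [sigmaShift]; split_ifs <;> omega,
          show sigmaShift d c i = i from by simp only [sigmaShift]; split_ifs <;> omega,
          show sigmaShift (i+1) i d = d from by simp only [sigmaShift]; split_ifs <;> omega,
          up_pred, down_eq_desc_inv T (le_of_lt hdc)]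
        exact conj_swap_inv
          (comm_descProd_far k T hcomm h1i hik (by omega) (by omega) (Or.inl (by omega)))
      by_cases hg2 : d + 1 ≤ i
      · rw [show sigmaShift d c (i+1) = i + 1 from by simp only [sigmaShift]; split_ifs <;> omega,
          show sigmaShift d c i = i from by simp only [sigmaShift]; split_ifs <;> omega,
          show sigmaShift (i+1) i d = d from by simp only [sigmaShift]; split_ifs <;> omega,
          up_pred, down_eq_desc_inv T (le_of_lt hdc)]
        exact conj_swap_inv
          (comm_descProd_far k T hcomm h1i hik (by omega) (by omega) (Or.inr (by omega)))
      by_cases hg4 : i = d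
      · obtain ⟨m, hm⟩ : ∃ m, i = c + m + 1 := ⟨i - c - 1, by omega⟩
        subst hm
        obtain rfl : d = c + m + 1 := by omega
        rw [show sigmaShift (c+m+1) c (c+m+1+1) = (c+m) + 2 from by
            simp only [sigmaShift]; split_ifs <;> omega,
          show sigmaShift (c+m+1) c (c+m+1) = c + m from by
            simp only [sigmaShift]; split_ifs <;> omega,
          show sigmaShift ((c+m)+2) (c+m) (c+m+1) = c + m from by
            simp only [sigmaShift]; split_ifs <;> omega,
          up_pred, up_two_inv, down_eq_desc_inv T (by omega : c ≤ c + m + 1),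
          down_eq_desc_inv T (by omega : c ≤ c + m),
          show c + m + 1 - c = m + 1 from by omega,
          show c + m - c = m from by omega]
        have hcm : T (c+m+1) * descProd T c m = descProd T c m * T (c+m+1) :=
          comm_descProd_far k T hcomm (by omega) (by omega) h1c (by omega) (Or.inr (by omega))
        have h2 := conj_swap_inv hcm
        rw [descProd_succ, mul_inv_rev, mul_inv_rev, ← mul_assoc, h2]
        group
      · -- c + 1 ≤ i ≤ d - 1
        obtain ⟨j, rfl⟩ : ∃ j, i = j + 1 := ⟨i - 1, by omega⟩
        rw [show sigmaShift d c (j+1+1) = j + 1 from by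
            simp only [sigmaShift]; split_ifs <;> omega,
          show sigmaShift d c (j+1) = j from by simp only [sigmaShift]; split_ifs <;> omega,
          show sigmaShift (j+1) j d = d from by simp only [sigmaShift]; split_ifs <;> omega,
          up_pred, up_pred, down_eq_desc_inv T (le_of_lt hdc)]
        exact conj_swap_inv
          (pass_desc k T hbraid hcomm (d - c) c j (by omega) (by omega) (by omega) (by omega))

end
end TrainAux

namespace TrainAux

set_option maxHeartbeats 2000000 in
lemma comp_asc (a m c d : ℕ) (h1a : 1 ≤ a) (ham : a ≤ m) (h1c : 1 ≤ c) (h1d : 1 ≤ d)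
    (hbc : m + 1 ≠ c) :
    (sigmaShift (sigmaShift (sigmaShift d (sigmaShift m (m+1) c) m) (sigmaShift d c (m+1)) d) (sigmaShift m (m+1) c) m = sigmaShift d (sigmaShift m (m+1) c) m) ∧ (sigmaShift a m (sigmaShift m (m+1) c) = sigmaShift a (m+1) c) ∧ (sigmaShift (sigmaShift (sigmaShift d (sigmaShift m (m+1) c) m) (sigmaShift d c (m+1)) d) (sigmaShift a (m+1) c) a = sigmaShift d (sigmaShift a (m+1) c) a) ∧ (sigmaShift (sigmaShift d (sigmaShift a (m+1) c) a) (sigmaShift d (sigmaShift m (m+1) c) m) (sigmaShift (sigmaShift d (sigmaShift m (m+1) c) m) (sigmaShift d c (m+1)) d) = sigmaShift (sigmaShift d (sigmaShift a (m+1) c) a) (sigmaShift d c (m+1)) d) := by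
  by_cases hcm : c = m
  · subst hcm
    rw [show sigmaShift c (c+1) c = c + 1 from by simp only [sigmaShift]; split_ifs <;> omega]
    rcases le_or_gt d c with hd | hd
    · rw [show sigmaShift d (c+1) c = c + 1 from by simp only [sigmaShift]; split_ifs <;> omega,
        show sigmaShift d c (c+1) = c + 1 from by simp only [sigmaShift]; split_ifs <;> omega, sigma_same]
      refine ⟨?_, ?_, ?_, ?_⟩ <;> simp only [sigmaShift] <;> (first | omega | (split_ifs <;> omega))
    · rw [show sigmaShift d (c+1) c = c from by simp only [sigmaShift]; split_ifs <;> omega,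
        show sigmaShift d c (c+1) = c from by simp only [sigmaShift]; split_ifs <;> omega, sigma_same]
      refine ⟨?_, ?_, ?_, ?_⟩ <;> simp only [sigmaShift] <;> (first | omega | (split_ifs <;> omega))
  · rw [show sigmaShift m (m+1) c = c from by simp only [sigmaShift]; split_ifs <;> omega]
    rcases lt_or_gt_of_ne hcm with hc | hc
    · -- c < m
      rcases lt_trichotomy d m with hd | rfl | hd
      · rw [show sigmaShift d c m = m from by simp only [sigmaShift]; split_ifs <;> omega,
          show sigmaShift d c (m+1) = m + 1 from by simp only [sigmaShift]; split_ifs <;> omega,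
          show sigmaShift m (m+1) d = d from by simp only [sigmaShift]; split_ifs <;> omega]
        refine ⟨?_, ?_, ?_, ?_⟩ <;> simp only [sigmaShift] <;> (first | omega | (split_ifs <;> omega))
      · rw [show sigmaShift d c d = d - 1 from by simp only [sigmaShift]; split_ifs <;> omega,
          show sigmaShift d c (d+1) = d + 1 from by simp only [sigmaShift]; split_ifs <;> omega,
          show sigmaShift (d-1) (d+1) d = d + 1 from by simp only [sigmaShift]; split_ifs <;> omega]
        refine ⟨?_, ?_, ?_, ?_⟩ <;> simp only [sigmaShift] <;> (first | omega | (split_ifs <;> omega))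
      · rw [show sigmaShift d c m = m - 1 from by simp only [sigmaShift]; split_ifs <;> omega,
          show sigmaShift d c (m+1) = m from by simp only [sigmaShift]; split_ifs <;> omega,
          show sigmaShift (m-1) m d = d from by simp only [sigmaShift]; split_ifs <;> omega]
        refine ⟨?_, ?_, ?_, ?_⟩ <;> simp only [sigmaShift] <;> (first | omega | (split_ifs <;> omega))
    · -- c > m, so c ≥ m + 2
      have hc2 : m + 2 ≤ c := by omega
      rcases lt_trichotomy d (m+1) with hd | rfl | hd
      · rw [show sigmaShift d c m = m + 1 from by simp only [sigmaShift]; split_ifs <;> omega,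
          show sigmaShift d c (m+1) = m + 2 from by simp only [sigmaShift]; split_ifs <;> omega,
          show sigmaShift (m+1) (m+2) d = d from by simp only [sigmaShift]; split_ifs <;> omega]
        refine ⟨?_, ?_, ?_, ?_⟩ <;> simp only [sigmaShift] <;> (first | omega | (split_ifs <;> omega))
      · rw [show sigmaShift (m+1) c m = m from by simp only [sigmaShift]; split_ifs <;> omega,
          show sigmaShift (m+1) c (m+1) = m + 2 from by simp only [sigmaShift]; split_ifs <;> omega,
          show sigmaShift m (m+2) (m+1) = m + 2 from by simp only [sigmaShift]; split_ifs <;> omega]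
        refine ⟨?_, ?_, ?_, ?_⟩ <;> simp only [sigmaShift] <;> (first | omega | (split_ifs <;> omega))
      · rw [show sigmaShift d c m = m from by simp only [sigmaShift]; split_ifs <;> omega,
          show sigmaShift d c (m+1) = m + 1 from by simp only [sigmaShift]; split_ifs <;> omega,
          show sigmaShift m (m+1) d = d from by simp only [sigmaShift]; split_ifs <;> omega]
        refine ⟨?_, ?_, ?_, ?_⟩ <;> simp only [sigmaShift] <;> (first | omega | (split_ifs <;> omega))

set_option maxHeartbeats 2000000 in
lemma comp_desc (a b c d : ℕ) (hba : b + 1 ≤ a) (h1b : 1 ≤ b) (h1c : 1 ≤ c) (h1d : 1 ≤ d)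
    (hbc : b ≠ c) :
    (sigmaShift (sigmaShift (sigmaShift d (sigmaShift (b+1) b c) (b+1)) (sigmaShift d c b) d) (sigmaShift (b+1) b c) (b+1) = sigmaShift d (sigmaShift (b+1) b c) (b+1)) ∧ (sigmaShift a (b+1) (sigmaShift (b+1) b c) = sigmaShift a b c) ∧ (sigmaShift (sigmaShift (sigmaShift d (sigmaShift (b+1) b c) (b+1)) (sigmaShift d c b) d) (sigmaShift a b c) a = sigmaShift d (sigmaShift a b c) a) ∧ (sigmaShift (sigmaShift d (sigmaShift a b c) a) (sigmaShift d (sigmaShift (b+1) b c) (b+1)) (sigmaShift (sigmaShift d (sigmaShift (b+1) b c) (b+1)) (sigmaShift d c b) d) = sigmaShift (sigmaShift d (sigmaShift a b c) a) (sigmaShift d c b) d) := by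
  by_cases hcb : c = b + 1
  · subst hcb
    rw [show sigmaShift (b+1) b (b+1) = b from by simp only [sigmaShift]; split_ifs <;> omega]
    rcases le_or_gt d b with hd | hd
    · rw [show sigmaShift d b (b+1) = b + 1 from by simp only [sigmaShift]; split_ifs <;> omega,
        show sigmaShift d (b+1) b = b + 1 from by simp only [sigmaShift]; split_ifs <;> omega, sigma_same]
      refine ⟨?_, ?_, ?_, ?_⟩ <;> simp only [sigmaShift] <;> (first | omega | (split_ifs <;> omega))
    · rw [show sigmaShift d b (b+1) = b from by simp only [sigmaShift]; split_ifs <;> omega,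
        show sigmaShift d (b+1) b = b from by simp only [sigmaShift]; split_ifs <;> omega, sigma_same]
      refine ⟨?_, ?_, ?_, ?_⟩ <;> simp only [sigmaShift] <;> (first | omega | (split_ifs <;> omega))
  · rw [show sigmaShift (b+1) b c = c from by simp only [sigmaShift]; split_ifs <;> omega]
    rcases lt_or_gt_of_ne (fun h => hbc h.symm) with hc | hc
    · -- c < b
      rcases lt_trichotomy d b with hd | rfl | hd
      · rw [show sigmaShift d c (b+1) = b + 1 from by simp only [sigmaShift]; split_ifs <;> omega,
          show sigmaShift d c b = b from by simp only [sigmaShift]; split_ifs <;> omega,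
          show sigmaShift (b+1) b d = d from by simp only [sigmaShift]; split_ifs <;> omega]
        refine ⟨?_, ?_, ?_, ?_⟩ <;> simp only [sigmaShift] <;> (first | omega | (split_ifs <;> omega))
      · rw [show sigmaShift d c (d+1) = d + 1 from by simp only [sigmaShift]; split_ifs <;> omega,
          show sigmaShift d c d = d - 1 from by simp only [sigmaShift]; split_ifs <;> omega,
          show sigmaShift (d+1) (d-1) d = d - 1 from by simp only [sigmaShift]; split_ifs <;> omega]
        refine ⟨?_, ?_, ?_, ?_⟩ <;> simp only [sigmaShift] <;> (first | omega | (split_ifs <;> omega))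
      · rw [show sigmaShift d c (b+1) = b from by simp only [sigmaShift]; split_ifs <;> omega,
          show sigmaShift d c b = b - 1 from by simp only [sigmaShift]; split_ifs <;> omega,
          show sigmaShift b (b-1) d = d from by simp only [sigmaShift]; split_ifs <;> omega]
        refine ⟨?_, ?_, ?_, ?_⟩ <;> simp only [sigmaShift] <;> (first | omega | (split_ifs <;> omega))
    · -- c > b, c ≠ b+1 so c ≥ b+2
      have hc2 : b + 2 ≤ c := by omega
      rcases lt_trichotomy d (b+1) with hd | rfl | hd
      · rw [show sigmaShift d c (b+1) = b + 2 from by simp only [sigmaShift]; split_ifs <;> omega,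
          show sigmaShift d c b = b + 1 from by simp only [sigmaShift]; split_ifs <;> omega,
          show sigmaShift (b+2) (b+1) d = d from by simp only [sigmaShift]; split_ifs <;> omega]
        refine ⟨?_, ?_, ?_, ?_⟩ <;> simp only [sigmaShift] <;> (first | omega | (split_ifs <;> omega))
      · rw [show sigmaShift (b+1) c (b+1) = b + 2 from by simp only [sigmaShift]; split_ifs <;> omega,
          show sigmaShift (b+1) c b = b from by simp only [sigmaShift]; split_ifs <;> omega,
          show sigmaShift (b+2) b (b+1) = b from by simp only [sigmaShift]; split_ifs <;> omega]
        refine ⟨?_, ?_, ?_, ?_⟩ <;> simp only [sigmaShift] <;> (first | omega | (split_ifs <;> omega))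
      · rw [show sigmaShift d c (b+1) = b + 1 from by simp only [sigmaShift]; split_ifs <;> omega,
          show sigmaShift d c b = b from by simp only [sigmaShift]; split_ifs <;> omega,
          show sigmaShift (b+1) b d = d from by simp only [sigmaShift]; split_ifs <;> omega]
        refine ⟨?_, ?_, ?_, ?_⟩ <;> simp only [sigmaShift] <;> (first | omega | (split_ifs <;> omega))

end TrainAux
end TrainCollisionAux


open TrainAux in
/-- Collision rule for trains: for `b ≠ c`,
`T_{a↗b} · T_{c↘d} = T_{c′↘d′} · T_{a′↗b′}` where `b′ = σ_{d,c}(b)`, `c′ = σ_{a,b}(c)`,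
`a′ = σ_{d,c′}(a)`, `d′ = σ_{a′,b′}(d)`. -/
theorem train_collision (k : ℕ) (T : ℕ → G)
    (hbraid : ∀ i, 1 ≤ i → i + 2 ≤ k →
      T i * T (i + 1) * T i = T (i + 1) * T i * T (i + 1))
    (hcomm : ∀ i j, 1 ≤ i → i + 1 ≤ k → 1 ≤ j → j + 1 ≤ k →
      (i + 1 < j ∨ j + 1 < i) → T i * T j = T j * T i) :
    ∀ a b c d, 1 ≤ a → a ≤ k → 1 ≤ b → b ≤ k → 1 ≤ c → c ≤ k → 1 ≤ d → d ≤ k →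
      b ≠ c →
      up T a b * down T c d =
        down T (sigmaShift a b c)
            (sigmaShift (sigmaShift d (sigmaShift a b c) a) (sigmaShift d c b) d) *
          up T (sigmaShift d (sigmaShift a b c) a) (sigmaShift d c b) := by
  suffices H : ∀ n a b c d, 1 ≤ a → a ≤ k → 1 ≤ b → b ≤ k → 1 ≤ c → c ≤ k → 1 ≤ d → d ≤ k →
      b ≠ c → (a - b) + (b - a) = n →
      up T a b * down T c d =
        down T (sigmaShift a b c)
            (sigmaShift (sigmaShift d (sigmaShift a b c) a) (sigmaShift d c b) d) *
          up T (sigmaShift d (sigmaShift a b c) a) (sigmaShift d c b) by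
    intro a b c d h1 h2 h3 h4 h5 h6 h7 h8 h9
    exact H ((a - b) + (b - a)) a b c d h1 h2 h3 h4 h5 h6 h7 h8 h9 rfl
  intro n
  induction n with
  | zero =>
    intro a b c d h1a hak h1b hbk h1c hck h1d hdk hbc hdist
    obtain rfl : a = b := by omega
    rw [show sigmaShift a a c = c from by simp only [sigmaShift]; split_ifs <;> omega,
      sigma_same, up_refl, up_refl, one_mul, mul_one]
  | succ n ih =>
    intro a b c d h1a hak h1b hbk h1c hck h1d hdk hbc hdist
    rcases lt_or_gt_of_ne (show a ≠ b by omega) with hab | hab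
    · obtain ⟨m, rfl⟩ : ∃ m, b = m + 1 := ⟨b - 1, by omega⟩
      have ham : a ≤ m := by omega
      have hstep := step_up k T hbraid hcomm m c d (by omega) hbk h1c hck h1d hdk hbc
      obtain ⟨E1, E2, E3, E4⟩ := comp_asc a m c d h1a ham h1c h1d hbc
      have hb1k : sigmaShift d c (m+1) ≤ k := sigma_le_k hbk hck
      have hb11 : 1 ≤ sigmaShift d c (m+1) := sigma_ge_one (by omega) h1c
      have hIH := ih a m (sigmaShift m (m+1) c)
        (sigmaShift (sigmaShift d (sigmaShift m (m+1) c) m) (sigmaShift d c (m+1)) d)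
        h1a hak (by omega) (by omega) (sigma_ge_one h1c (by omega)) (sigma_le_k hck hbk)
        (sigma_ge_one h1d hb11) (sigma_le_k hdk hb1k)
        (by simp only [sigmaShift]; split_ifs <;> omega) (by omega)
      rw [← up_trans T a m (m+1), mul_assoc, hstep, ← mul_assoc, hIH, mul_assoc, E1, up_trans,
        E2, E3, E4]
    · have hstep := step_down k T hbraid hcomm b c d h1b (by omega) h1c hck h1d hdk hbc
      obtain ⟨F1, F2, F3, F4⟩ := comp_desc a b c d (by omega) h1b h1c h1d hbc
      have hb1k : sigmaShift d c b ≤ k := sigma_le_k hbk hck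
      have hb11 : 1 ≤ sigmaShift d c b := sigma_ge_one h1b h1c
      have hIH := ih a (b+1) (sigmaShift (b+1) b c)
        (sigmaShift (sigmaShift d (sigmaShift (b+1) b c) (b+1)) (sigmaShift d c b) d)
        h1a hak (by omega) (by omega) (sigma_ge_one h1c h1b) (sigma_le_k hck hbk)
        (sigma_ge_one h1d hb11) (sigma_le_k hdk hb1k)
        (by simp only [sigmaShift]; split_ifs <;> omega) (by omega)
      rw [← up_trans T a (b+1) b, mul_assoc, hstep, ← mul_assoc, hIH, mul_assoc, F1, up_trans,
        F2, F3, F4]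
end
end
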